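/- arXiv:2102.00684 — 15 statements merged into one kernel-verified Lean document; each statement's English description precedes it below -/
import Mathlib

section
/- Consistency around the broken cube for Hirota's discrete KdV equation: suppose the four equations 𝒜 = 0, 𝒮 = 0, ℬ = 0 and 𝒞 = 0 hold. Then the remaining two equations ℬ′ = 0 and 𝒞′ = 0 also hold; in particular, the three ways of computing v₁₂ from the initial data (u₀, u₁, u₂, v₀) — via 𝒮, via ℬ′, and via 𝒞′ — give the same value. -/
/-- Consistency around the broken cube for Hirota's discrete KdV equation:
if 𝒜 = 0, 𝒮 = 0, ℬ = 0 and 𝒞 = 0 hold, then ℬ′ = 0 and 𝒞′ = 0 also hold. -/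
theorem dKdV_CABC (lam u₀ u₁ u₂ u₁₂ v₀ v₁ v₂ v₁₂ : ℂ)
    (hu₀ : u₀ ≠ 0) (hu₁ : u₁ ≠ 0) (hu₂ : u₂ ≠ 0) (hv₀ : v₀ ≠ 0) (hv₂ : v₂ ≠ 0)
    (hA : u₁₂ - u₀ - 1 / u₂ + 1 / u₁ = 0)
    (hS : u₀ - v₁₂ - 1 / u₁ + lam / v₂ = 0)
    (hB : (u₀ - v₀) * (1 / u₀ + v₂) - 1 + lam = 0)
    (hC : 1 / u₀ - lam / v₀ - u₁ + v₁ = 0) :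
    (u₁ - v₁) * (1 / u₁ + v₁₂) - 1 + lam = 0 ∧
    1 / u₂ - lam / v₂ - u₁₂ + v₁₂ = 0 := by
  have h1 : v₁₂ = u₀ - 1 / u₁ + lam / v₂ := by linear_combination -hS
  have h2 : v₁ = u₁ - 1 / u₀ + lam / v₀ := by linear_combination hC
  subst h1 h2
  constructor
  · have key : (1 / u₀ - lam / v₀) * (u₀ + lam / v₂) - 1 + lam = 0 := by
      field_simp at hB ⊢
      linear_combination (-lam) * hB
    linear_combination key
  · linear_combination -hA
end

section
/- Tetrahedron property for Hirota's discrete KdV equation on the broken cube: if the equations 𝒜 = 0, 𝒮 = 0, ℬ = 0 and 𝒞 = 0 hold, then the two tetrahedron equations hold: 𝒦₁: (v₁₂ + 1/u₁)(1/u₀ − λ/v₀) − 1 + λ = 0 and 𝒦₂: (λ/v₂ + u₀)(u₁ − v₁) − 1 + λ = 0. -/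
/-- Tetrahedron property for Hirota's discrete KdV equation on the broken cube:
if 𝒜 = 0, 𝒮 = 0, ℬ = 0 and 𝒞 = 0 hold, then the two tetrahedron equations
𝒦₁ = 0 and 𝒦₂ = 0 hold. -/
theorem dKdV_tetrahedron (lam u₀ u₁ u₂ u₁₂ v₀ v₁ v₂ v₁₂ : ℂ)
    (hu₀ : u₀ ≠ 0) (hu₁ : u₁ ≠ 0) (hu₂ : u₂ ≠ 0) (hv₀ : v₀ ≠ 0) (hv₂ : v₂ ≠ 0)
    (hA : u₁₂ - u₀ - 1 / u₂ + 1 / u₁ = 0)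
    (hS : u₀ - v₁₂ - 1 / u₁ + lam / v₂ = 0)
    (hB : (u₀ - v₀) * (1 / u₀ + v₂) - 1 + lam = 0)
    (hC : 1 / u₀ - lam / v₀ - u₁ + v₁ = 0) :
    (v₁₂ + 1 / u₁) * (1 / u₀ - lam / v₀) - 1 + lam = 0 ∧
    (lam / v₂ + u₀) * (u₁ - v₁) - 1 + lam = 0 := by
  have h1 : v₁₂ + 1 / u₁ = u₀ + lam / v₂ := by linear_combination -hS
  have h2 : 1 / u₀ - lam / v₀ = u₁ - v₁ := by linear_combination hC
  have key : (u₀ + lam / v₂) * (1 / u₀ - lam / v₀) - 1 + lam = 0 := by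
    field_simp
    field_simp at hB
    linear_combination -lam * hB
  constructor
  · rw [h1]; exact key
  · rw [← h2]; linear_combination key
end

section
/- Lax pair for Hirota's discrete KdV equation: let λ ∈ ℂ with λ ≠ 0, and let u, ū, ũ, ũ̄ ∈ ℂ be nonzero. Define the 2×2 complex matrices L(x, y) = [[y − 1/x, λ], [1, 0]] and M(x) = [[−1/x, λ], [1, −x]]. Then the matrix identity L(ũ, ũ̄) · M(u) = M(ū) · L(u, ū) holds if and only if ũ̄ − u − 1/ũ + 1/ū = 0, i.e., if and only if (u, ū, ũ, ũ̄) satisfies Hirota's discrete KdV equation. -/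
/-- Lax pair for Hirota's discrete KdV equation: with
`L (x, y) = !![y - 1/x, λ; 1, 0]` and `M x = !![-1/x, λ; 1, -x]`,
the compatibility condition `L(ũ, ũ̄) * M(u) = M(ū) * L(u, ū)` holds
iff `(u, ū, ũ, ũ̄)` satisfies Hirota's discrete KdV equation. -/
theorem dKdV_lax_pair (lam u ub ut utb : ℂ) (hlam : lam ≠ 0)
    (hu : u ≠ 0) (hub : ub ≠ 0) (hut : ut ≠ 0) (hutb : utb ≠ 0) :
    (!![utb - 1 / ut, lam; 1, 0] * !![-(1 / u), lam; 1, -u] : Matrix (Fin 2) (Fin 2) ℂ) =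
      !![-(1 / ub), lam; 1, -ub] * !![ub - 1 / u, lam; 1, 0] ↔
    utb - u - 1 / ut + 1 / ub = 0 := by
  rw [Matrix.mul_fin_two, Matrix.mul_fin_two, ← Matrix.ext_iff]
  simp only [Fin.forall_fin_two, Matrix.of_apply, Matrix.cons_val', Matrix.cons_val_zero,
    Matrix.cons_val_one, Matrix.head_cons, Matrix.empty_val', Matrix.cons_val_fin_one,
    Matrix.head_fin_const]
  constructor
  · rintro ⟨⟨h00, h01⟩, -⟩
    field_simp at h01
    have h2 : lam * ((utb * ut - 1) * ub - u * ut * ub) = lam * (-ut) := by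
      linear_combination lam * h01
    have h3 := mul_left_cancel₀ hlam h2
    field_simp
    linear_combination h3
  · intro h
    have h' : utb = u + 1 / ut - 1 / ub := by linear_combination h
    subst h'
    refine ⟨⟨?_, ?_⟩, ?_, ?_⟩ <;> field_simp <;> ring
end

section
/- Let λ ∈ ℂ and let u, v : ℤ² → ℂ be nowhere-zero functions satisfying, for all (l, m) ∈ ℤ²: (A) u_{l+1,m+1} − u_{l,m} − 1/u_{l,m+1} + 1/u_{l+1,m} = 0; (S) u_{l,m} − v_{l+1,m+1} − 1/u_{l+1,m} + λ/v_{l,m+1} = 0; (B) (u_{l,m} − v_{l,m})(1/u_{l,m} + v_{l,m+1}) − 1 + λ = 0; (C) 1/u_{l,m} − λ/v_{l,m} − u_{l+1,m} + v_{l+1,m} = 0. Assume moreover λ − v_{l,m} v_{l+1,m} ≠ 0 for all (l, m). Then v satisfies the multi-quadratic quad-equation (v_{l,m} v_{l+1,m} − v_{l,m+1} v_{l+1,m+1})² + (v_{l,m} − v_{l+1,m+1})(v_{l+1,m} − v_{l,m+1})(λ − v_{l,m} v_{l+1,m})(λ − v_{l,m+1} v_{l+1,m+1}) = 0 for all (l,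 m) ∈ ℤ². -/
/-- If `u`, `v` satisfy the broken-cube system of Hirota's discrete KdV equation,
then `v` satisfies the multi-quadratic quad-equation. -/
theorem dKdV_multiquadratic (lam : ℂ) (u v : ℤ → ℤ → ℂ)
    (hu : ∀ l m : ℤ, u l m ≠ 0) (hv : ∀ l m : ℤ, v l m ≠ 0)
    (hA : ∀ l m : ℤ, u (l+1) (m+1) - u l m - 1 / u l (m+1) + 1 / u (l+1) m = 0)
    (hS : ∀ l m : ℤ, u l m - v (l+1) (m+1) - 1 / u (l+1) m + lam / v l (m+1) = 0)
    (hB : ∀ l m : ℤ, (u l m - v l m) * (1 / u l m + v l (m+1)) - 1 + lam = 0)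
    (hC : ∀ l m : ℤ, 1 / u l m - lam / v l m - u (l+1) m + v (l+1) m = 0)
    (hld : ∀ l m : ℤ, lam - v l m * v (l+1) m ≠ 0) :
    ∀ l m : ℤ,
      (v l m * v (l+1) m - v l (m+1) * v (l+1) (m+1))^2 +
        (v l m - v (l+1) (m+1)) * (v (l+1) m - v l (m+1)) *
        (lam - v l m * v (l+1) m) * (lam - v l (m+1) * v (l+1) (m+1)) = 0 := by
  intro l m
  have ha := hu l m
  have hb := hu (l+1) m
  have hp := hv l m
  have hq := hv (l+1) m
  have hr := hv l (m+1)
  have hs := hv (l+1) (m+1)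
  have hB1 := hB l m
  have hC1 := hC l m
  have hS1 := hS l m
  set a := u l m with ha'
  set b := u (l+1) m with hb'
  set p := v l m with hp'
  set q := v (l+1) m with hq'
  set r := v l (m+1) with hr'
  set s := v (l+1) (m+1) with hs'
  have q1 : r * a^2 + (lam - p*r) * a - p = 0 := by
    field_simp at hB1
    linear_combination hB1
  have e1 : a * p * b = p - lam*a + q*a*p := by
    field_simp at hC1
    linear_combination -hC1
  have e2 : b * (a*r - s*r + lam) = r := by
    field_simp at hS1
    linear_combination hS1
  have q2 : r*(q*p - lam)*a^2 + (q*p - lam)*(lam - r*s)*a + p*(lam - r*s) = 0 := by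
    linear_combination (-(a*r - s*r + lam)) * e1 + a*p * e2
  have key : a * p^2 * r^2 *
      ((p*q - r*s)^2 + (p - s)*(q - r)*(lam - p*q)*(lam - r*s)) = 0 := by
    linear_combination (-(p*r^2*(p*q - lam))*(a*(p*q - r*s) + (p - s)*(lam - r*s))) * q1 +
      (p*r^2*(a*(p*q - r*s) - (p*q - lam)*(p - s))) * q2
  have hT : (p*q - r*s)^2 + (p - s)*(q - r)*(lam - p*q)*(lam - r*s) = 0 := by
    have h2 : a * p^2 * r^2 ≠ 0 := by
      simp [ha, hp, hr]
    exact (mul_eq_zero.mp key).resolve_left h2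
  linear_combination hT
end

section
/- Let λ ∈ ℂ and let u, F, G : ℤ² → ℂ with u and G nowhere zero. Suppose that for all (l, m) ∈ ℤ²: F_{l+1,m} = −(1/u_{l,m} − u_{l+1,m}) F_{l,m} + λ G_{l,m}; G_{l+1,m} = F_{l,m}; F_{l,m+1} = −(1/u_{l,m}) F_{l,m} + λ G_{l,m}; and G_{l,m+1} = F_{l,m} − u_{l,m} G_{l,m}. Then G satisfies the lattice potential modified KdV equation (G_{l+1,m+1} − λ G_{l,m})(G_{l+1,m} − G_{l,m+1}) + G_{l,m} G_{l+1,m} = 0 for all (l, m) ∈ ℤ². -/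
/-- If `(F, G)` satisfies the componentwise Lax system of Hirota's discrete
KdV equation, then `G` satisfies the lattice potential mKdV equation. -/
theorem dKdV_lax_to_lmKdV (lam : ℂ) (u F G : ℤ → ℤ → ℂ)
    (hu : ∀ l m : ℤ, u l m ≠ 0) (hG : ∀ l m : ℤ, G l m ≠ 0)
    (hF1 : ∀ l m : ℤ, F (l+1) m = -(1 / u l m - u (l+1) m) * F l m + lam * G l m)
    (hG1 : ∀ l m : ℤ, G (l+1) m = F l m)
    (hF2 : ∀ l m : ℤ, F l (m+1) = -(1 / u l m) * F l m + lam * G l m)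
    (hG2 : ∀ l m : ℤ, G l (m+1) = F l m - u l m * G l m) :
    ∀ l m : ℤ,
      (G (l+1) (m+1) - lam * G l m) * (G (l+1) m - G l (m+1)) + G l m * G (l+1) m = 0 := by
  intro l m
  rw [hG2 (l+1) m, hF1 l m, hG1 l m, hG2 l m]
  field_simp [hu l m]
  ring
end

section
/- Let λ ∈ ℂ and let a, b ∈ ℂ satisfy a² = −λ and b² = 1 − λ. Let φ : ℤ² → ℂ be nowhere zero and satisfy the lattice potential mKdV equation φ_{l+1,m+1} (b φ_{l,m+1} − a φ_{l+1,m}) = φ_{l,m} (b φ_{l+1,m} − a φ_{l,m+1}) for all (l, m) ∈ ℤ². Assume also a φ_{l+1,m} − b φ_{l,m+1} ≠ 0 for all (l, m). Then u : ℤ² → ℂ defined by u_{l,m} = (a φ_{l+1,m} − b φ_{l,m+1}) / φ_{l,m} satisfies Hirota's discrete KdV equation u_{l+1,m+1} − u_{l,m} = 1/u_{l,m+1} − 1/u_{l+1,m} for all (l, m) ∈ ℤ². -/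
/-- A solution of the lattice potential mKdV equation yields a solution of
Hirota's discrete KdV equation via `u = (a φ̄ - b φ̃) / φ`. -/
theorem lmKdV_to_dKdV (lam a b : ℂ) (ha : a^2 = -lam) (hb : b^2 = 1 - lam)
    (φ : ℤ → ℤ → ℂ) (hφ : ∀ l m : ℤ, φ l m ≠ 0)
    (hmkdv : ∀ l m : ℤ,
      φ (l+1) (m+1) * (b * φ l (m+1) - a * φ (l+1) m) =
        φ l m * (b * φ (l+1) m - a * φ l (m+1)))
    (hne : ∀ l m : ℤ, a * φ (l+1) m - b * φ l (m+1) ≠ 0)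
    (u : ℤ → ℤ → ℂ)
    (hu : ∀ l m : ℤ, u l m = (a * φ (l+1) m - b * φ l (m+1)) / φ l m) :
    ∀ l m : ℤ,
      u (l+1) (m+1) - u l m = 1 / u l (m+1) - 1 / u (l+1) m := by
  intro l m
  have hab : b^2 = a^2 + 1 := by rw [ha, hb]; ring
  have h1 := hmkdv l m
  have h2 := hmkdv (l+1) m
  have h3 := hmkdv l (m+1)
  have hA := hφ l m
  have hE := hφ (l+1) (m+1)
  have hn2 := hne (l+1) m
  have hn3 := hne l (m+1)
  rw [hu, hu, hu, hu, one_div_div, one_div_div]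
  rw [div_sub_div _ _ hE hA, div_sub_div _ _ hn3 hn2,
    div_eq_div_iff (mul_ne_zero hE hA) (mul_ne_zero hn3 hn2)]
  linear_combination
    ((a * φ (l+1) (m+1) - b * φ l (m+1+1)) * (a * φ (l+1+1) m - b * φ (l+1) (m+1))) * h1
    - a * φ l m * (a * φ (l+1) (m+1) - b * φ l (m+1+1)) * h2
    + b * φ l m * (a * φ (l+1+1) m - b * φ (l+1) (m+1)) * h3
    + φ l m * φ (l+1) (m+1) *
        (φ l (m+1) * (a * φ (l+1+1) m - b * φ (l+1) (m+1)) -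
          φ (l+1) m * (a * φ (l+1) (m+1) - b * φ l (m+1+1))) * hab
end

section
/- Let λ ∈ ℂ and let a, b ∈ ℂ satisfy a² = −λ and b² = 1 − λ. Let φ : ℤ² → ℂ be nowhere zero and satisfy the lattice potential mKdV equation φ_{l+1,m+1} (b φ_{l,m+1} − a φ_{l+1,m}) = φ_{l,m} (b φ_{l+1,m} − a φ_{l,m+1}) for all (l, m) ∈ ℤ². Then v : ℤ² → ℂ defined by v_{l,m} = a φ_{l+1,m} / φ_{l,m} satisfies the multi-quadratic equation (v_{l,m} v_{l+1,m} − v_{l,m+1} v_{l+1,m+1})² + (v_{l,m} − v_{l+1,m+1})(v_{l+1,m} − v_{l,m+1})(λ − v_{l,m} v_{l+1,m})(λ − v_{l,m+1} v_{l+1,m+1}) = 0 for all (l, m) ∈ ℤ². -/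
set_option maxHeartbeats 4000000 in
/-- Auxiliary algebraic identity: the multi-quadratic expression vanishes given the
two lattice mKdV relations. -/
theorem lmKdV_aux (lam a b p q r s t u : ℂ) (ha : a^2 = -lam) (hb : b^2 = 1 - lam)
    (hp : p ≠ 0) (hq : q ≠ 0) (hr : r ≠ 0) (hs : s ≠ 0) (ht : t ≠ 0) (hu : u ≠ 0)
    (E1 : s * (b * r - a * q) = p * (b * q - a * r))
    (E2 : u * (b * s - a * t) = q * (b * t - a * s)) :
    (a*q/p * (a*t/q) - a*s/r * (a*u/s))^2 +
      (a*q/p - a*u/s) * (a*t/q - a*s/r) * (lam - a*q/p * (a*t/q)) * (lam - a*s/r * (a*u/s)) = 0 := by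
  have hlam : lam = -a^2 := by linear_combination ha
  subst hlam
  have hb' : b^2 = 1 + a^2 := by linear_combination hb
  have hL1 : b*r - a*q ≠ 0 := by
    intro h
    have h2 : b*q - a*r = 0 := by
      have h3 : p * (b*q - a*r) = 0 := by rw [← E1, h, mul_zero]
      exact (mul_eq_zero.mp h3).resolve_left hp
    have : q * r = 0 := by linear_combination (b*q)*h + (a*q)*h2 - q*r*hb'
    exact mul_ne_zero hq hr this
  have hL2 : b*s - a*t ≠ 0 := by
    intro h
    have h2 : b*t - a*s = 0 := by
      have h3 : q * (b*t - a*s) = 0 := by rw [← E2, h, mul_zero]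
      exact (mul_eq_zero.mp h3).resolve_left hq
    have : s * t = 0 := by linear_combination (b*t)*h + (a*t)*h2 - s*t*hb'
    exact mul_ne_zero hs ht this
  have key : (b*r - a*q)^5 * (b*s - a*t)^2 *
      ((a*q*(a*t)*(r*s) - a*s*(a*u)*(p*q))^2 + (a*q*s - a*u*p)*(a*t*r - a*s*q)*(-a^2*(p*q) - a*q*(a*t))*(-a^2*(r*s) - a*s*(a*u))) = 0 := by
    linear_combination (a^4*b^6*q^2*r^6*s^3*t^2 - a^4*b^6*p*q^3*r^5*s^2*t^2 - 2*a^5*b^5*q^2*r^6*s^2*t^3 - 4*a^5*b^5*q^3*r^5*s^3*t^2 - a^5*b^5*p*q^2*r^6*s^2*t^2 + 2*a^5*b^5*p*q^3*r^5*s^3*t + 5*a^5*b^5*p*q^4*r^4*s^2*t^2 + a^6*b^4*q^2*r^6*s*t^4 + 8*a^6*b^4*q^3*r^5*s^2*t^3 + 6*a^6*b^4*q^4*r^4*s^3*t^2 + 2*a^6*b^4*p*q^2*r^6*s*t^3 + a^6*b^4*p*q^3*r^5*t^4 + a^6*b^4*p*q^3*r^5*s^2*t^2 - 2*a^6*b^4*p*q^4*r^4*s*t^3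 - 8*a^6*b^4*p*q^4*r^4*s^3*t - 9*a^6*b^4*p*q^5*r^3*s^2*t^2 + a^6*b^4*p^2*q^2*r^6*s*t^2 + 2*a^6*b^4*p^2*q^3*r^5*t^3 - 2*a^6*b^4*p^2*q^3*r^5*s^2*t - 4*a^6*b^4*p^2*q^4*r^4*s*t^2 + a^6*b^4*p^2*q^4*r^4*s^3 - 2*a^6*b^4*p^2*q^5*r^3*t^3 + 2*a^6*b^4*p^2*q^5*r^3*s^2*t + a^6*b^4*p^2*q^6*r^2*s*t^2 + a^6*b^4*p^3*q^3*r^5*t^2 - 2*a^6*b^4*p^3*q^4*r^4*s*t - 4*a^6*b^4*p^3*q^5*r^3*t^2 + a^6*b^4*p^3*q^5*r^3*s^2 + 2*a^6*b^4*p^3*q^6*r^2*s*t + a^6*b^4*p^3*q^7*r*t^2 - 2*a^6*b^4*p^4*q^5*r^3*t + a^6*b^4*p^4*q^6*r^2*s + 2*a^6*b^4*p^4*q^7*r*t + a^6*b^4*p^5*q^7*r + a^6*b^6*q^2*r^6*s^3*t^2 + a^6*b^6*q^3*r^5*s^2*t^3 - a^6*b^6*q^3*r^5*s^4*t - a^6*b^6*q^4*r^4*s^3*t^2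 - a^6*b^6*p*q^2*r^6*s*t^3 + a^6*b^6*p*q^2*r^6*s^3*t - a^6*b^6*p*q^3*r^5*t^4 + 3*a^6*b^6*p*q^3*r^5*s^2*t^2 - a^6*b^6*p*q^3*r^5*s^4 + 2*a^6*b^6*p*q^4*r^4*s*t^3 - 2*a^6*b^6*p*q^4*r^4*s^3*t - a^6*b^6*p*q^5*r^3*s^2*t^2 - a^6*b^6*p^2*q^2*r^6*s*t^2 - 2*a^6*b^6*p^2*q^3*r^5*t^3 + 2*a^6*b^6*p^2*q^3*r^5*s^2*t + 4*a^6*b^6*p^2*q^4*r^4*s*t^2 - a^6*b^6*p^2*q^4*r^4*s^3 + 2*a^6*b^6*p^2*q^5*r^3*t^3 - 2*a^6*b^6*p^2*q^5*r^3*s^2*t - a^6*b^6*p^2*q^6*r^2*s*t^2 - a^6*b^6*p^3*q^3*r^5*t^2 + 2*a^6*b^6*p^3*q^4*r^4*s*t + 4*a^6*b^6*p^3*q^5*r^3*t^2 - a^6*b^6*p^3*q^5*r^3*s^2 - 2*a^6*b^6*p^3*q^6*r^2*s*t - a^6*b^6*p^3*q^7*r*t^2 + 2*a^6*b^6*p^4*q^5*r^3*t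 - a^6*b^6*p^4*q^6*r^2*s - 2*a^6*b^6*p^4*q^7*r*t - a^6*b^6*p^5*q^7*r - 4*a^7*b^3*q^3*r^5*s*t^4 - 12*a^7*b^3*q^4*r^4*s^2*t^3 - 4*a^7*b^3*q^5*r^3*s^3*t^2 - a^7*b^3*p*q^2*r^6*t^4 - 6*a^7*b^3*p*q^3*r^5*s*t^3 - 3*a^7*b^3*p*q^4*r^4*t^4 + 5*a^7*b^3*p*q^4*r^4*s^2*t^2 + 6*a^7*b^3*p*q^5*r^3*s*t^3 + 12*a^7*b^3*p*q^5*r^3*s^3*t + 7*a^7*b^3*p*q^6*r^2*s^2*t^2 - 2*a^7*b^3*p^2*q^2*r^6*t^3 - 2*a^7*b^3*p^2*q^4*r^4*t^3 + 6*a^7*b^3*p^2*q^4*r^4*s^2*t + 10*a^7*b^3*p^2*q^5*r^3*s*t^2 - 4*a^7*b^3*p^2*q^5*r^3*s^3 + 4*a^7*b^3*p^2*q^6*r^2*t^3 - 6*a^7*b^3*p^2*q^6*r^2*s^2*t - 2*a^7*b^3*p^2*q^7*r*s*t^2 - a^7*b^3*p^3*q^2*r^6*t^2 + 2*a^7*b^3*p^3*q^3*r^5*s*t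 + 5*a^7*b^3*p^3*q^4*r^4*t^2 - a^7*b^3*p^3*q^4*r^4*s^2 + 2*a^7*b^3*p^3*q^5*r^3*s*t + 5*a^7*b^3*p^3*q^6*r^2*t^2 - 3*a^7*b^3*p^3*q^6*r^2*s^2 - 4*a^7*b^3*p^3*q^7*r*s*t - a^7*b^3*p^3*q^8*t^2 + 4*a^7*b^3*p^4*q^4*r^4*t - 2*a^7*b^3*p^4*q^5*r^3*s - 2*a^7*b^3*p^4*q^6*r^2*t - 2*a^7*b^3*p^4*q^7*r*s - 2*a^7*b^3*p^4*q^8*t - 3*a^7*b^3*p^5*q^6*r^2 - a^7*b^3*p^5*q^8 - 2*a^7*b^5*q^2*r^6*s^2*t^3 - a^7*b^5*q^3*r^5*s*t^4 - 3*a^7*b^5*q^3*r^5*s^3*t^2 - 3*a^7*b^5*q^4*r^4*s^2*t^3 + 5*a^7*b^5*q^4*r^4*s^4*t + 4*a^7*b^5*q^5*r^3*s^3*t^2 + a^7*b^5*p*q^2*r^6*t^4 - 2*a^7*b^5*p*q^2*r^6*s^2*t^2 + a^7*b^5*p*q^3*r^5*s*t^3 - 3*a^7*b^5*p*q^3*r^5*s^3*t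 + 3*a^7*b^5*p*q^4*r^4*t^4 - 10*a^7*b^5*p*q^4*r^4*s^2*t^2 + 5*a^7*b^5*p*q^4*r^4*s^4 - 6*a^7*b^5*p*q^5*r^3*s*t^3 + 8*a^7*b^5*p*q^5*r^3*s^3*t + 3*a^7*b^5*p*q^6*r^2*s^2*t^2 + 2*a^7*b^5*p^2*q^2*r^6*t^3 + 2*a^7*b^5*p^2*q^4*r^4*t^3 - 6*a^7*b^5*p^2*q^4*r^4*s^2*t - 10*a^7*b^5*p^2*q^5*r^3*s*t^2 + 4*a^7*b^5*p^2*q^5*r^3*s^3 - 4*a^7*b^5*p^2*q^6*r^2*t^3 + 6*a^7*b^5*p^2*q^6*r^2*s^2*t + 2*a^7*b^5*p^2*q^7*r*s*t^2 + a^7*b^5*p^3*q^2*r^6*t^2 - 2*a^7*b^5*p^3*q^3*r^5*s*t - 5*a^7*b^5*p^3*q^4*r^4*t^2 + a^7*b^5*p^3*q^4*r^4*s^2 - 2*a^7*b^5*p^3*q^5*r^3*s*t - 5*a^7*b^5*p^3*q^6*r^2*t^2 + 3*a^7*b^5*p^3*q^6*r^2*s^2 + 4*a^7*b^5*p^3*q^7*r*s*t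 + a^7*b^5*p^3*q^8*t^2 - 4*a^7*b^5*p^4*q^4*r^4*t + 2*a^7*b^5*p^4*q^5*r^3*s + 2*a^7*b^5*p^4*q^6*r^2*t + 2*a^7*b^5*p^4*q^7*r*s + 2*a^7*b^5*p^4*q^8*t + 3*a^7*b^5*p^5*q^6*r^2 + a^7*b^5*p^5*q^8 + 6*a^8*b^2*q^4*r^4*s*t^4 + 8*a^8*b^2*q^5*r^3*s^2*t^3 + a^8*b^2*q^6*r^2*s^3*t^2 + 3*a^8*b^2*p*q^3*r^5*t^4 + 6*a^8*b^2*p*q^4*r^4*s*t^3 + 3*a^8*b^2*p*q^5*r^3*t^4 - 11*a^8*b^2*p*q^5*r^3*s^2*t^2 - 6*a^8*b^2*p*q^6*r^2*s*t^3 - 8*a^8*b^2*p*q^6*r^2*s^3*t - 2*a^8*b^2*p*q^7*r*s^2*t^2 + 4*a^8*b^2*p^2*q^3*r^5*t^3 - 5*a^8*b^2*p^2*q^4*r^4*s*t^2 - 2*a^8*b^2*p^2*q^5*r^3*t^3 - 6*a^8*b^2*p^2*q^5*r^3*s^2*t - 8*a^8*b^2*p^2*q^6*r^2*s*t^2 +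 6*a^8*b^2*p^2*q^6*r^2*s^3 - 2*a^8*b^2*p^2*q^7*r*t^3 + 6*a^8*b^2*p^2*q^7*r*s^2*t + a^8*b^2*p^2*q^8*s*t^2 - a^8*b^2*p^3*q^3*r^5*t^2 - 4*a^8*b^2*p^3*q^4*r^4*s*t - 10*a^8*b^2*p^3*q^5*r^3*t^2 + 3*a^8*b^2*p^3*q^5*r^3*s^2 + 2*a^8*b^2*p^3*q^6*r^2*s*t - a^8*b^2*p^3*q^7*r*t^2 + 3*a^8*b^2*p^3*q^7*r*s^2 + 2*a^8*b^2*p^3*q^8*s*t - 2*a^8*b^2*p^4*q^3*r^5*t + a^8*b^2*p^4*q^4*r^4*s - 2*a^8*b^2*p^4*q^5*r^3*t + 4*a^8*b^2*p^4*q^6*r^2*s + 4*a^8*b^2*p^4*q^7*r*t + a^8*b^2*p^4*q^8*s + 3*a^8*b^2*p^5*q^5*r^3 + 3*a^8*b^2*p^5*q^7*r + a^8*b^4*q^2*r^6*s*t^4 + 8*a^8*b^4*q^3*r^5*s^2*t^3 + 4*a^8*b^4*q^4*r^4*s*t^4 + a^8*b^4*q^4*r^4*s^3*t^2 + 2*a^8*b^4*q^5*r^3*s^2*t^3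 - 10*a^8*b^4*q^5*r^3*s^4*t - 6*a^8*b^4*q^6*r^2*s^3*t^2 + 2*a^8*b^4*p*q^2*r^6*s*t^3 - 2*a^8*b^4*p*q^3*r^5*t^4 + 6*a^8*b^4*p*q^3*r^5*s^2*t^2 + 2*a^8*b^4*p*q^4*r^4*s*t^3 + 2*a^8*b^4*p*q^4*r^4*s^3*t - 3*a^8*b^4*p*q^5*r^3*t^4 + 12*a^8*b^4*p*q^5*r^3*s^2*t^2 - 10*a^8*b^4*p*q^5*r^3*s^4 + 6*a^8*b^4*p*q^6*r^2*s*t^3 - 12*a^8*b^4*p*q^6*r^2*s^3*t - 3*a^8*b^4*p*q^7*r*s^2*t^2 + a^8*b^4*p^2*q^2*r^6*s*t^2 - 2*a^8*b^4*p^2*q^3*r^5*t^3 - 2*a^8*b^4*p^2*q^3*r^5*s^2*t + a^8*b^4*p^2*q^4*r^4*s*t^2 + a^8*b^4*p^2*q^4*r^4*s^3 + 8*a^8*b^4*p^2*q^5*r^3*s^2*t + 9*a^8*b^4*p^2*q^6*r^2*s*t^2 - 6*a^8*b^4*p^2*q^6*r^2*s^3 + 2*a^8*b^4*p^2*q^7*r*t^3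 - 6*a^8*b^4*p^2*q^7*r*s^2*t - a^8*b^4*p^2*q^8*s*t^2 + 2*a^8*b^4*p^3*q^3*r^5*t^2 + 2*a^8*b^4*p^3*q^4*r^4*s*t + 6*a^8*b^4*p^3*q^5*r^3*t^2 - 2*a^8*b^4*p^3*q^5*r^3*s^2 + 2*a^8*b^4*p^3*q^7*r*t^2 - 3*a^8*b^4*p^3*q^7*r*s^2 - 2*a^8*b^4*p^3*q^8*s*t + 2*a^8*b^4*p^4*q^3*r^5*t - a^8*b^4*p^4*q^4*r^4*s - 3*a^8*b^4*p^4*q^6*r^2*s - 2*a^8*b^4*p^4*q^7*r*t - a^8*b^4*p^4*q^8*s - 3*a^8*b^4*p^5*q^5*r^3 - 2*a^8*b^4*p^5*q^7*r - 4*a^9*b*q^5*r^3*s*t^4 - 2*a^9*b*q^6*r^2*s^2*t^3 - 3*a^9*b*p*q^4*r^4*t^4 - 2*a^9*b*p*q^5*r^3*s*t^3 - a^9*b*p*q^6*r^2*t^4 + 8*a^9*b*p*q^6*r^2*s^2*t^2 + 2*a^9*b*p*q^7*r*s*t^3 + 2*a^9*b*p*q^7*r*s^3*t - 2*a^9*b*p^2*q^4*r^4*t^3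 + 6*a^9*b*p^2*q^5*r^3*s*t^2 + 2*a^9*b*p^2*q^6*r^2*t^3 + 2*a^9*b*p^2*q^6*r^2*s^2*t + 2*a^9*b*p^2*q^7*r*s*t^2 - 4*a^9*b*p^2*q^7*r*s^3 - 2*a^9*b*p^2*q^8*s^2*t + 4*a^9*b*p^3*q^4*r^4*t^2 + 2*a^9*b*p^3*q^5*r^3*s*t + 4*a^9*b*p^3*q^6*r^2*t^2 - 3*a^9*b*p^3*q^6*r^2*s^2 - 2*a^9*b*p^3*q^7*r*s*t - a^9*b*p^3*q^8*s^2 + 2*a^9*b*p^4*q^4*r^4*t - 2*a^9*b*p^4*q^5*r^3*s - 2*a^9*b*p^4*q^6*r^2*t - 2*a^9*b*p^4*q^7*r*s - a^9*b*p^5*q^4*r^4 - 3*a^9*b*p^5*q^6*r^2 - 4*a^9*b^3*q^3*r^5*s*t^4 - 12*a^9*b^3*q^4*r^4*s^2*t^3 - 6*a^9*b^3*q^5*r^3*s*t^4 + 6*a^9*b^3*q^5*r^3*s^3*t^2 + 2*a^9*b^3*q^6*r^2*s^2*t^3 + 10*a^9*b^3*q^6*r^2*s^4*t + 4*a^9*b^3*q^7*r*s^3*t^2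 - a^9*b^3*p*q^2*r^6*t^4 - 6*a^9*b^3*p*q^3*r^5*s*t^3 - 5*a^9*b^3*p*q^4*r^4*s^2*t^2 - 2*a^9*b^3*p*q^5*r^3*s*t^3 + 2*a^9*b^3*p*q^5*r^3*s^3*t + a^9*b^3*p*q^6*r^2*t^4 - 6*a^9*b^3*p*q^6*r^2*s^2*t^2 + 10*a^9*b^3*p*q^6*r^2*s^4 - 2*a^9*b^3*p*q^7*r*s*t^3 + 8*a^9*b^3*p*q^7*r*s^3*t + a^9*b^3*p*q^8*s^2*t^2 - 2*a^9*b^3*p^2*q^2*r^6*t^3 + 6*a^9*b^3*p^2*q^4*r^4*s^2*t + 4*a^9*b^3*p^2*q^5*r^3*s*t^2 - 4*a^9*b^3*p^2*q^5*r^3*s^3 + 2*a^9*b^3*p^2*q^6*r^2*t^3 - 8*a^9*b^3*p^2*q^6*r^2*s^2*t - 4*a^9*b^3*p^2*q^7*r*s*t^2 + 4*a^9*b^3*p^2*q^7*r*s^3 + 2*a^9*b^3*p^2*q^8*s^2*t - a^9*b^3*p^3*q^2*r^6*t^2 + 2*a^9*b^3*p^3*q^3*r^5*s*t + a^9*b^3*p^3*q^4*r^4*t^2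 - a^9*b^3*p^3*q^4*r^4*s^2 + a^9*b^3*p^3*q^6*r^2*t^2 - 2*a^9*b^3*p^3*q^7*r*s*t - a^9*b^3*p^3*q^8*t^2 + a^9*b^3*p^3*q^8*s^2 + 2*a^9*b^3*p^4*q^4*r^4*t - 2*a^9*b^3*p^4*q^8*t + a^9*b^3*p^5*q^4*r^4 - a^9*b^3*p^5*q^8 + a^10*q^6*r^2*s*t^4 + a^10*p*q^5*r^3*t^4 - 2*a^10*p*q^7*r*s^2*t^2 - 2*a^10*p^2*q^6*r^2*s*t^2 + a^10*p^2*q^8*s^3 - 2*a^10*p^3*q^5*r^3*t^2 + a^10*p^3*q^7*r*s^2 + a^10*p^4*q^6*r^2*s + a^10*p^5*q^5*r^3 + 6*a^10*b^2*q^4*r^4*s*t^4 + 8*a^10*b^2*q^5*r^3*s^2*t^3 + 4*a^10*b^2*q^6*r^2*s*t^4 - 9*a^10*b^2*q^6*r^2*s^3*t^2 - 3*a^10*b^2*q^7*r*s^2*t^3 - 5*a^10*b^2*q^7*r*s^4*t - a^10*b^2*q^8*s^3*t^2 + 3*a^10*b^2*p*q^3*r^5*t^4 + 6*a^10*b^2*p*q^4*r^4*s*t^3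 + 2*a^10*b^2*p*q^5*r^3*t^4 - a^10*b^2*p*q^5*r^3*s^2*t^2 - a^10*b^2*p*q^6*r^2*s*t^3 - 3*a^10*b^2*p*q^6*r^2*s^3*t + a^10*b^2*p*q^7*r*s^2*t^2 - 5*a^10*b^2*p*q^7*r*s^4 - 2*a^10*b^2*p*q^8*s^3*t + 4*a^10*b^2*p^2*q^3*r^5*t^3 - 5*a^10*b^2*p^2*q^4*r^4*s*t^2 - 2*a^10*b^2*p^2*q^5*r^3*t^3 - 6*a^10*b^2*p^2*q^5*r^3*s^2*t - 6*a^10*b^2*p^2*q^6*r^2*s*t^2 + 6*a^10*b^2*p^2*q^6*r^2*s^3 - 2*a^10*b^2*p^2*q^7*r*t^3 + 6*a^10*b^2*p^2*q^7*r*s^2*t + a^10*b^2*p^2*q^8*s*t^2 - a^10*b^2*p^2*q^8*s^3 - a^10*b^2*p^3*q^3*r^5*t^2 - 4*a^10*b^2*p^3*q^4*r^4*s*t - 8*a^10*b^2*p^3*q^5*r^3*t^2 + 3*a^10*b^2*p^3*q^5*r^3*s^2 + 2*a^10*b^2*p^3*q^6*r^2*s*t - a^10*b^2*p^3*q^7*r*t^2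 + 2*a^10*b^2*p^3*q^7*r*s^2 + 2*a^10*b^2*p^3*q^8*s*t - 2*a^10*b^2*p^4*q^3*r^5*t + a^10*b^2*p^4*q^4*r^4*s - 2*a^10*b^2*p^4*q^5*r^3*t + 3*a^10*b^2*p^4*q^6*r^2*s + 4*a^10*b^2*p^4*q^7*r*t + a^10*b^2*p^4*q^8*s + 2*a^10*b^2*p^5*q^5*r^3 + 3*a^10*b^2*p^5*q^7*r - 4*a^11*b*q^5*r^3*s*t^4 - 2*a^11*b*q^6*r^2*s^2*t^3 - a^11*b*q^7*r*s*t^4 + 5*a^11*b*q^7*r*s^3*t^2 + a^11*b*q^8*s^2*t^3 + a^11*b*q^8*s^4*t - 3*a^11*b*p*q^4*r^4*t^4 - 2*a^11*b*p*q^5*r^3*s*t^3 - a^11*b*p*q^6*r^2*t^4 + 3*a^11*b*p*q^6*r^2*s^2*t^2 + a^11*b*p*q^7*r*s*t^3 + a^11*b*p*q^7*r*s^3*t + a^11*b*p*q^8*s^4 - 2*a^11*b*p^2*q^4*r^4*t^3 + 6*a^11*b*p^2*q^5*r^3*s*t^2 + 2*a^11*b*p^2*q^6*r^2*t^3 + 2*a^11*b*p^2*q^6*r^2*s^2*t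 + 2*a^11*b*p^2*q^7*r*s*t^2 - 4*a^11*b*p^2*q^7*r*s^3 - 2*a^11*b*p^2*q^8*s^2*t + 4*a^11*b*p^3*q^4*r^4*t^2 + 2*a^11*b*p^3*q^5*r^3*s*t + 4*a^11*b*p^3*q^6*r^2*t^2 - 3*a^11*b*p^3*q^6*r^2*s^2 - 2*a^11*b*p^3*q^7*r*s*t - a^11*b*p^3*q^8*s^2 + 2*a^11*b*p^4*q^4*r^4*t - 2*a^11*b*p^4*q^5*r^3*s - 2*a^11*b*p^4*q^6*r^2*t - 2*a^11*b*p^4*q^7*r*s - a^11*b*p^5*q^4*r^4 - 3*a^11*b*p^5*q^6*r^2 + a^12*q^6*r^2*s*t^4 - a^12*q^8*s^3*t^2 + a^12*p*q^5*r^3*t^4 - a^12*p*q^7*r*s^2*t^2 - 2*a^12*p^2*q^6*r^2*s*t^2 + a^12*p^2*q^8*s^3 - 2*a^12*p^3*q^5*r^3*t^2 + a^12*p^3*q^7*r*s^2 + a^12*p^4*q^6*r^2*s + a^12*p^5*q^5*r^3) * E1 + (-2*a^4*b^6*p*q^2*r^6*s^3*t + a^4*b^6*p^2*q^2*r^5*s^3*u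 + a^4*b^6*p^2*q^3*r^5*s^2*t + 2*a^5*b^5*p*q^2*r^6*s^2*t^2 + 10*a^5*b^5*p*q^3*r^5*s^3*t - a^5*b^5*p^2*q^2*r^5*s^2*t*u - 5*a^5*b^5*p^2*q^3*r^4*s^3*u - a^5*b^5*p^2*q^3*r^5*s^3 - 5*a^5*b^5*p^2*q^4*r^4*s^2*t - 10*a^6*b^4*p*q^3*r^5*s^2*t^2 - 20*a^6*b^4*p*q^4*r^4*s^3*t + 5*a^6*b^4*p^2*q^3*r^4*s^2*t*u + 10*a^6*b^4*p^2*q^4*r^3*s^3*u + 5*a^6*b^4*p^2*q^4*r^4*s^3 + 10*a^6*b^4*p^2*q^5*r^3*s^2*t + a^6*b^6*q^2*r^6*s^3*t^2 - a^6*b^6*q^3*r^5*s^4*t - a^6*b^6*p*q*r^6*s^2*t^2*u - a^6*b^6*p*q*r^7*s^2*t^2 + a^6*b^6*p*q^2*r^5*s^3*t*u - a^6*b^6*p*q^2*r^6*s*t^3 + 2*a^6*b^6*p*q^2*r^6*s^3*t + a^6*b^6*p*q^3*r^5*s^2*t^2 - a^6*b^6*p*q^3*r^5*s^4 - a^6*b^6*p^2*q*r^6*s^2*t*u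 - a^6*b^6*p^2*q*r^7*s^2*t + a^6*b^6*p^2*q^2*r^5*s^3*u - a^6*b^6*p^2*q^2*r^6*s*t^2 + a^6*b^6*p^2*q^2*r^6*s^3 + a^6*b^6*p^2*q^3*r^5*s^2*t + 20*a^7*b^3*p*q^4*r^4*s^2*t^2 + 20*a^7*b^3*p*q^5*r^3*s^3*t - 10*a^7*b^3*p^2*q^4*r^3*s^2*t*u - 10*a^7*b^3*p^2*q^5*r^2*s^3*u - 10*a^7*b^3*p^2*q^5*r^3*s^3 - 10*a^7*b^3*p^2*q^6*r^2*s^2*t - a^7*b^5*q^2*r^6*s^2*t^3 - 4*a^7*b^5*q^3*r^5*s^3*t^2 + 5*a^7*b^5*q^4*r^4*s^4*t + a^7*b^5*p*q*r^6*s*t^3*u + a^7*b^5*p*q*r^7*s*t^3 + 4*a^7*b^5*p*q^2*r^5*s^2*t^2*u + 4*a^7*b^5*p*q^2*r^6*s^2*t^2 - 5*a^7*b^5*p*q^3*r^4*s^3*t*u + 5*a^7*b^5*p*q^3*r^5*s*t^3 - 10*a^7*b^5*p*q^3*r^5*s^3*t - 5*a^7*b^5*p*q^4*r^4*s^2*t^2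 + 5*a^7*b^5*p*q^4*r^4*s^4 + a^7*b^5*p^2*q*r^6*s*t^2*u + a^7*b^5*p^2*q*r^7*s*t^2 + 4*a^7*b^5*p^2*q^2*r^5*s^2*t*u + 5*a^7*b^5*p^2*q^2*r^6*s^2*t - 5*a^7*b^5*p^2*q^3*r^4*s^3*u + 5*a^7*b^5*p^2*q^3*r^5*s*t^2 - 6*a^7*b^5*p^2*q^3*r^5*s^3 - 5*a^7*b^5*p^2*q^4*r^4*s^2*t - 20*a^8*b^2*p*q^5*r^3*s^2*t^2 - 10*a^8*b^2*p*q^6*r^2*s^3*t + 10*a^8*b^2*p^2*q^5*r^2*s^2*t*u + 5*a^8*b^2*p^2*q^6*r*s^3*u + 10*a^8*b^2*p^2*q^6*r^2*s^3 + 5*a^8*b^2*p^2*q^7*r*s^2*t + 5*a^8*b^4*q^3*r^5*s^2*t^3 + 5*a^8*b^4*q^4*r^4*s^3*t^2 - 10*a^8*b^4*q^5*r^3*s^4*t - 5*a^8*b^4*p*q^2*r^5*s*t^3*u - 5*a^8*b^4*p*q^2*r^6*s*t^3 - 5*a^8*b^4*p*q^3*r^4*s^2*t^2*u - 5*a^8*b^4*p*q^3*r^5*s^2*t^2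 + 10*a^8*b^4*p*q^4*r^3*s^3*t*u - 10*a^8*b^4*p*q^4*r^4*s*t^3 + 20*a^8*b^4*p*q^4*r^4*s^3*t + 10*a^8*b^4*p*q^5*r^3*s^2*t^2 - 10*a^8*b^4*p*q^5*r^3*s^4 - 5*a^8*b^4*p^2*q^2*r^5*s*t^2*u - 5*a^8*b^4*p^2*q^2*r^6*s*t^2 - 5*a^8*b^4*p^2*q^3*r^4*s^2*t*u - 10*a^8*b^4*p^2*q^3*r^5*s^2*t + 10*a^8*b^4*p^2*q^4*r^3*s^3*u - 10*a^8*b^4*p^2*q^4*r^4*s*t^2 + 15*a^8*b^4*p^2*q^4*r^4*s^3 + 10*a^8*b^4*p^2*q^5*r^3*s^2*t + 10*a^9*b*p*q^6*r^2*s^2*t^2 + 2*a^9*b*p*q^7*r*s^3*t - 5*a^9*b*p^2*q^6*r*s^2*t*u - a^9*b*p^2*q^7*s^3*u - 5*a^9*b*p^2*q^7*r*s^3 - a^9*b*p^2*q^8*s^2*t - 10*a^9*b^3*q^4*r^4*s^2*t^3 + 10*a^9*b^3*q^6*r^2*s^4*t + 10*a^9*b^3*p*q^3*r^4*s*t^3*u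 + 10*a^9*b^3*p*q^3*r^5*s*t^3 - 10*a^9*b^3*p*q^5*r^2*s^3*t*u + 10*a^9*b^3*p*q^5*r^3*s*t^3 - 20*a^9*b^3*p*q^5*r^3*s^3*t - 10*a^9*b^3*p*q^6*r^2*s^2*t^2 + 10*a^9*b^3*p*q^6*r^2*s^4 + 10*a^9*b^3*p^2*q^3*r^4*s*t^2*u + 10*a^9*b^3*p^2*q^3*r^5*s*t^2 + 10*a^9*b^3*p^2*q^4*r^4*s^2*t - 10*a^9*b^3*p^2*q^5*r^2*s^3*u + 10*a^9*b^3*p^2*q^5*r^3*s*t^2 - 20*a^9*b^3*p^2*q^5*r^3*s^3 - 10*a^9*b^3*p^2*q^6*r^2*s^2*t - 2*a^10*p*q^7*r*s^2*t^2 + a^10*p^2*q^7*s^2*t*u + a^10*p^2*q^8*s^3 + 10*a^10*b^2*q^5*r^3*s^2*t^3 - 5*a^10*b^2*q^6*r^2*s^3*t^2 - 5*a^10*b^2*q^7*r*s^4*t - 10*a^10*b^2*p*q^4*r^3*s*t^3*u - 10*a^10*b^2*p*q^4*r^4*s*t^3 + 5*a^10*b^2*p*q^5*r^2*s^2*t^2*u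 + 5*a^10*b^2*p*q^5*r^3*s^2*t^2 + 5*a^10*b^2*p*q^6*r*s^3*t*u - 5*a^10*b^2*p*q^6*r^2*s*t^3 + 10*a^10*b^2*p*q^6*r^2*s^3*t + 5*a^10*b^2*p*q^7*r*s^2*t^2 - 5*a^10*b^2*p*q^7*r*s^4 - 10*a^10*b^2*p^2*q^4*r^3*s*t^2*u - 10*a^10*b^2*p^2*q^4*r^4*s*t^2 + 5*a^10*b^2*p^2*q^5*r^2*s^2*t*u - 5*a^10*b^2*p^2*q^5*r^3*s^2*t + 5*a^10*b^2*p^2*q^6*r*s^3*u - 5*a^10*b^2*p^2*q^6*r^2*s*t^2 + 15*a^10*b^2*p^2*q^6*r^2*s^3 + 5*a^10*b^2*p^2*q^7*r*s^2*t - 5*a^11*b*q^6*r^2*s^2*t^3 + 4*a^11*b*q^7*r*s^3*t^2 + a^11*b*q^8*s^4*t + 5*a^11*b*p*q^5*r^2*s*t^3*u + 5*a^11*b*p*q^5*r^3*s*t^3 - 4*a^11*b*p*q^6*r*s^2*t^2*u - 4*a^11*b*p*q^6*r^2*s^2*t^2 - a^11*b*p*q^7*s^3*t*u + a^11*b*p*q^7*r*s*t^3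 - 2*a^11*b*p*q^7*r*s^3*t - a^11*b*p*q^8*s^2*t^2 + a^11*b*p*q^8*s^4 + 5*a^11*b*p^2*q^5*r^2*s*t^2*u + 5*a^11*b*p^2*q^5*r^3*s*t^2 - 4*a^11*b*p^2*q^6*r*s^2*t*u + a^11*b*p^2*q^6*r^2*s^2*t - a^11*b*p^2*q^7*s^3*u + a^11*b*p^2*q^7*r*s*t^2 - 6*a^11*b*p^2*q^7*r*s^3 - a^11*b*p^2*q^8*s^2*t + a^12*q^7*r*s^2*t^3 - a^12*q^8*s^3*t^2 - a^12*p*q^6*r*s*t^3*u - a^12*p*q^6*r^2*s*t^3 + a^12*p*q^7*s^2*t^2*u + a^12*p*q^7*r*s^2*t^2 - a^12*p^2*q^6*r*s*t^2*u - a^12*p^2*q^6*r^2*s*t^2 + a^12*p^2*q^7*s^2*t*u + a^12*p^2*q^8*s^3) * E2 + (-a^6*b^5*p^2*q^4*r^5*t^4 - 2*a^6*b^5*p^3*q^4*r^5*t^3 + 2*a^6*b^5*p^3*q^6*r^3*t^3 - a^6*b^5*p^4*q^4*r^5*t^2 + 4*a^6*b^5*p^4*q^6*r^3*t^2 - a^6*b^5*p^4*q^8*r*t^2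 + 2*a^6*b^5*p^5*q^6*r^3*t - 2*a^6*b^5*p^5*q^8*r*t - a^6*b^5*p^6*q^8*r + 2*a^7*b^4*p^2*q^3*r^6*t^4 + 3*a^7*b^4*p^2*q^5*r^4*t^4 + 4*a^7*b^4*p^3*q^3*r^6*t^3 - 4*a^7*b^4*p^3*q^7*r^2*t^3 + 2*a^7*b^4*p^4*q^3*r^6*t^2 - 9*a^7*b^4*p^4*q^5*r^4*t^2 - 4*a^7*b^4*p^4*q^7*r^2*t^2 + a^7*b^4*p^4*q^9*t^2 - 6*a^7*b^4*p^5*q^5*r^4*t + 4*a^7*b^4*p^5*q^7*r^2*t + 2*a^7*b^4*p^5*q^9*t + 4*a^7*b^4*p^6*q^7*r^2 + a^7*b^4*p^6*q^9 - a^8*b^3*p^2*q^2*r^7*t^4 - 6*a^8*b^3*p^2*q^4*r^5*t^4 - 3*a^8*b^3*p^2*q^6*r^3*t^4 - 2*a^8*b^3*p^3*q^2*r^7*t^3 - 6*a^8*b^3*p^3*q^4*r^5*t^3 + 6*a^8*b^3*p^3*q^6*r^3*t^3 + 2*a^8*b^3*p^3*q^8*r*t^3 - a^8*b^3*p^4*q^2*r^7*t^2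 + 6*a^8*b^3*p^4*q^4*r^5*t^2 + 15*a^8*b^3*p^4*q^6*r^3*t^2 + 6*a^8*b^3*p^5*q^4*r^5*t - 6*a^8*b^3*p^5*q^8*r*t - 6*a^8*b^3*p^6*q^6*r^3 - 4*a^8*b^3*p^6*q^8*r + 3*a^9*b^2*p^2*q^3*r^6*t^4 + 6*a^9*b^2*p^2*q^5*r^4*t^4 + a^9*b^2*p^2*q^7*r^2*t^4 + 4*a^9*b^2*p^3*q^3*r^6*t^3 - 4*a^9*b^2*p^3*q^7*r^2*t^3 - a^9*b^2*p^4*q^3*r^6*t^2 - 14*a^9*b^2*p^4*q^5*r^4*t^2 - 5*a^9*b^2*p^4*q^7*r^2*t^2 - 2*a^9*b^2*p^5*q^3*r^6*t - 4*a^9*b^2*p^5*q^5*r^4*t + 6*a^9*b^2*p^5*q^7*r^2*t + 4*a^9*b^2*p^6*q^5*r^4 + 6*a^9*b^2*p^6*q^7*r^2 - 3*a^10*b*p^2*q^4*r^5*t^4 - 2*a^10*b*p^2*q^6*r^3*t^4 - 2*a^10*b*p^3*q^4*r^5*t^3 + 2*a^10*b*p^3*q^6*r^3*t^3 + 4*a^10*b*p^4*q^4*r^5*t^2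 + 6*a^10*b*p^4*q^6*r^3*t^2 + 2*a^10*b*p^5*q^4*r^5*t - 2*a^10*b*p^5*q^6*r^3*t - a^10*b*p^6*q^4*r^5 - 4*a^10*b*p^6*q^6*r^3 + a^11*p^2*q^5*r^4*t^4 - 2*a^11*p^4*q^5*r^4*t^2 + a^11*p^6*q^5*r^4) * hb'
  have hG : ((a*q*(a*t)*(r*s) - a*s*(a*u)*(p*q))^2 + (a*q*s - a*u*p)*(a*t*r - a*s*q)*(-a^2*(p*q) - a*q*(a*t))*(-a^2*(r*s) - a*s*(a*u))) = 0 :=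
    (mul_eq_zero.mp key).resolve_left
      (mul_ne_zero (pow_ne_zero _ hL1) (pow_ne_zero _ hL2))
  have hA : (a*q/p * (a*t/q) - a*s/r * (a*u/s)) * (p*q*r*s)
      = a*q*(a*t)*(r*s) - a*s*(a*u)*(p*q) := by field_simp; try ring
  have hB : (a*q/p - a*u/s) * (p*s) = a*q*s - a*u*p := by field_simp; try ring
  have hC : (a*t/q - a*s/r) * (q*r) = a*t*r - a*s*q := by field_simp; try ring
  have hD : (-a^2 - a*q/p * (a*t/q)) * (p*q) = -a^2*(p*q) - a*q*(a*t) := by field_simp; try ring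
  have hE : (-a^2 - a*s/r * (a*u/s)) * (r*s) = -a^2*(r*s) - a*s*(a*u) := by field_simp; try ring
  have hexp : ((a*q/p * (a*t/q) - a*s/r * (a*u/s))^2 +
      (a*q/p - a*u/s) * (a*t/q - a*s/r) * (-a^2 - a*q/p * (a*t/q)) * (-a^2 - a*s/r * (a*u/s)))
        * (p*q*r*s)^2
      = ((a*q*(a*t)*(r*s) - a*s*(a*u)*(p*q))^2 + (a*q*s - a*u*p)*(a*t*r - a*s*q)*(-a^2*(p*q) - a*q*(a*t))*(-a^2*(r*s) - a*s*(a*u))) := by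
    calc ((a*q/p * (a*t/q) - a*s/r * (a*u/s))^2 +
      (a*q/p - a*u/s) * (a*t/q - a*s/r) * (-a^2 - a*q/p * (a*t/q)) * (-a^2 - a*s/r * (a*u/s)))
        * (p*q*r*s)^2
        = ((a*q/p * (a*t/q) - a*s/r * (a*u/s)) * (p*q*r*s))^2 +
          ((a*q/p - a*u/s) * (p*s)) * ((a*t/q - a*s/r) * (q*r)) *
          ((-a^2 - a*q/p * (a*t/q)) * (p*q)) * ((-a^2 - a*s/r * (a*u/s)) * (r*s)) := by ring
      _ = ((a*q*(a*t)*(r*s) - a*s*(a*u)*(p*q))^2 + (a*q*s - a*u*p)*(a*t*r - a*s*q)*(-a^2*(p*q) - a*q*(a*t))*(-a^2*(r*s) - a*s*(a*u))) := by rw [hA, hB, hC, hD, hE]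
  have hne : (p*q*r*s)^2 ≠ 0 :=
    pow_ne_zero _ (mul_ne_zero (mul_ne_zero (mul_ne_zero hp hq) hr) hs)
  have := hexp.trans hG
  exact (mul_eq_zero.mp this).resolve_right hne

/-- A solution of the lattice potential mKdV equation yields a solution of the
multi-quadratic quad-equation via `v = a φ̄ / φ`. -/
theorem lmKdV_to_multiquadratic (lam a b : ℂ) (ha : a^2 = -lam) (hb : b^2 = 1 - lam)
    (φ : ℤ → ℤ → ℂ) (hφ : ∀ l m : ℤ, φ l m ≠ 0)
    (hmkdv : ∀ l m : ℤ,
      φ (l+1) (m+1) * (b * φ l (m+1) - a * φ (l+1) m) =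
        φ l m * (b * φ (l+1) m - a * φ l (m+1)))
    (v : ℤ → ℤ → ℂ)
    (hv : ∀ l m : ℤ, v l m = a * φ (l+1) m / φ l m) :
    ∀ l m : ℤ,
      (v l m * v (l+1) m - v l (m+1) * v (l+1) (m+1))^2 +
        (v l m - v (l+1) (m+1)) * (v (l+1) m - v l (m+1)) *
        (lam - v l m * v (l+1) m) * (lam - v l (m+1) * v (l+1) (m+1)) = 0 := by
  intro l m
  have E1 := hmkdv l m
  have E2 := hmkdv (l+1) m
  rw [hv l m, hv (l+1) m, hv l (m+1), hv (l+1) (m+1)]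
  exact lmKdV_aux lam a b (φ l m) (φ (l+1) m) (φ l (m+1)) (φ (l+1) (m+1))
    (φ (l+1+1) m) (φ (l+1+1) (m+1))
    ha hb (hφ l m) (hφ (l+1) m) (hφ l (m+1)) (hφ (l+1) (m+1))
    (hφ (l+1+1) m) (hφ (l+1+1) (m+1))
    (by linear_combination E1) (by linear_combination E2)
end

section
/- Discriminant factorization for the multi-quadratic polynomial associated with Hirota's discrete KdV equation: fix λ ∈ ℂ and x, y, z ∈ ℂ, and write 𝒜′(w, x, y, z) = (w x − y z)² + (w − z)(x − y)(λ − w x)(λ − y z) as a quadratic polynomial a w² + b w + c in w. Then its discriminant satisfies b² − 4 a c = (x − y)² (y z − λ)² ((x z − λ)² + 4 x z). -/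
/-- The multi-quadratic polynomial associated with Hirota's discrete KdV equation. -/
def dKdVMultiQuad (lam w x y z : ℂ) : ℂ :=
  (w * x - y * z)^2 + (w - z) * (x - y) * (lam - w * x) * (lam - y * z)

/-- Discriminant factorization: writing `𝒜′(w, x, y, z)` as a quadratic
`a w² + b w + c` in `w`, its discriminant factors as
`(x - y)² (y z - λ)² ((x z - λ)² + 4 x z)`. -/
theorem dKdVMultiQuad_discriminant (lam x y z a b c : ℂ)
    (h : ∀ w : ℂ, dKdVMultiQuad lam w x y z = a * w^2 + b * w + c) :
    b^2 - 4 * a * c = (x - y)^2 * (y * z - lam)^2 * ((x * z - lam)^2 + 4 * (x * z)) := by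
  have h0 := h 0
  have h1 := h 1
  have h2 := h (-1)
  simp only [dKdVMultiQuad] at h0 h1 h2
  have hc : c = dKdVMultiQuad lam 0 x y z := by rw [dKdVMultiQuad]; linear_combination -h0
  have hb : b = (dKdVMultiQuad lam 1 x y z - dKdVMultiQuad lam (-1) x y z) / 2 := by
    rw [dKdVMultiQuad, dKdVMultiQuad]; linear_combination (h2 - h1) / 2
  have ha : a = (dKdVMultiQuad lam 1 x y z + dKdVMultiQuad lam (-1) x y z) / 2
      - dKdVMultiQuad lam 0 x y z := by
    rw [dKdVMultiQuad, dKdVMultiQuad, dKdVMultiQuad]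
    linear_combination h0 - (h1 + h2) / 2
  subst ha hb hc
  simp only [dKdVMultiQuad]
  ring
end

section
/- Consistency around the broken cube for the non-autonomous discrete KdV equation: suppose the four equations 𝒜 = 0, 𝒮 = 0, ℬ = 0 and 𝒞 = 0 hold. Then the remaining two equations ℬ′: (u₁ − v₁)((q₀ − p₁)/u₁ + v₁₂) − q₀ + λ = 0 and 𝒞′: (q₁ − p₀)/u₂ − (λ − p₀)/v₂ − u₁₂ + v₁₂ = 0 also hold. -/
/-- Consistency around the broken cube for the non-autonomous discrete KdV equation:
if 𝒜 = 0, 𝒮 = 0, ℬ = 0 and 𝒞 = 0 hold, then ℬ′ = 0 and 𝒞′ = 0 also hold. -/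
theorem nadKdV_CABC (lam p₀ p₁ q₀ q₁ u₀ u₁ u₂ u₁₂ v₀ v₁ v₂ v₁₂ : ℂ)
    (hu₀ : u₀ ≠ 0) (hu₁ : u₁ ≠ 0) (hu₂ : u₂ ≠ 0) (hv₀ : v₀ ≠ 0) (hv₂ : v₂ ≠ 0)
    (hA : u₁₂ - u₀ - (q₁ - p₀) / u₂ + (q₀ - p₁) / u₁ = 0)
    (hS : u₀ - v₁₂ - (q₀ - p₁) / u₁ + (lam - p₀) / v₂ = 0)
    (hB : (u₀ - v₀) * ((q₀ - p₀) / u₀ + v₂) - q₀ + lam = 0)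
    (hC : (q₀ - p₀) / u₀ - (lam - p₀) / v₀ - u₁ + v₁ = 0) :
    (u₁ - v₁) * ((q₀ - p₁) / u₁ + v₁₂) - q₀ + lam = 0 ∧
    (q₁ - p₀) / u₂ - (lam - p₀) / v₂ - u₁₂ + v₁₂ = 0 := by
  refine ⟨?_, by linear_combination -hA - hS⟩
  field_simp at hS hB hC ⊢
  have key : u₀ * v₀ * v₂ * ((u₁ - v₁) * (q₀ - p₁ + v₁₂ * u₁) - u₁ * q₀ + lam * u₁) = 0 := by
    linear_combination (v₁ - u₁) * u₀ * v₀ * hS - u₁ * (u₀ * v₂ + lam - p₀) * hC -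
      u₁ * (lam - p₀) * hB
  have h := mul_ne_zero (mul_ne_zero hu₀ hv₀) hv₂
  linear_combination (mul_eq_zero.mp key).resolve_left h
end

section
/- Tetrahedron property for the non-autonomous discrete KdV equation on the broken cube: if the equations 𝒜 = 0, 𝒮 = 0, ℬ = 0 and 𝒞 = 0 hold, then the two tetrahedron equations hold: 𝒦₁: (v₁₂ + (q₀ − p₁)/u₁)((q₀ − p₀)/u₀ − (λ − p₀)/v₀) − q₀ + λ = 0 and 𝒦₂: ((λ − p₀)/v₂ + u₀)(u₁ − v₁) − q₀ + λ = 0. -/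
/-- Tetrahedron property for the non-autonomous discrete KdV equation on the
broken cube: if 𝒜 = 0, 𝒮 = 0, ℬ = 0 and 𝒞 = 0 hold, then the two tetrahedron
equations 𝒦₁ = 0 and 𝒦₂ = 0 hold. -/
theorem nadKdV_tetrahedron (lam p₀ p₁ q₀ q₁ u₀ u₁ u₂ u₁₂ v₀ v₁ v₂ v₁₂ : ℂ)
    (hu₀ : u₀ ≠ 0) (hu₁ : u₁ ≠ 0) (hu₂ : u₂ ≠ 0) (hv₀ : v₀ ≠ 0) (hv₂ : v₂ ≠ 0)
    (hA : u₁₂ - u₀ - (q₁ - p₀) / u₂ + (q₀ - p₁) / u₁ = 0)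
    (hS : u₀ - v₁₂ - (q₀ - p₁) / u₁ + (lam - p₀) / v₂ = 0)
    (hB : (u₀ - v₀) * ((q₀ - p₀) / u₀ + v₂) - q₀ + lam = 0)
    (hC : (q₀ - p₀) / u₀ - (lam - p₀) / v₀ - u₁ + v₁ = 0) :
    (v₁₂ + (q₀ - p₁) / u₁) * ((q₀ - p₀) / u₀ - (lam - p₀) / v₀) - q₀ + lam = 0 ∧
    ((lam - p₀) / v₂ + u₀) * (u₁ - v₁) - q₀ + lam = 0 := by
  have key : (u₀ + (lam - p₀) / v₂) * ((q₀ - p₀) / u₀ - (lam - p₀) / v₀)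
      - q₀ + lam = 0 := by
    field_simp at hB ⊢
    ring_nf
    ring_nf at hB
    linear_combination (-(lam - p₀)) * hB
  constructor
  · linear_combination key - ((q₀ - p₀) / u₀ - (lam - p₀) / v₀) * hS
  · linear_combination key - ((lam - p₀) / v₂ + u₀) * hC
end

section
/- Lax pair for the non-autonomous discrete KdV equation: fix λ ∈ ℂ, p₀, p₁, q₀, q₁ ∈ ℂ, and nonzero u, ū, ũ ∈ ℂ and ũ̄ ∈ ℂ satisfying ũ̄ − u = (q₁ − p₀)/ũ − (q₀ − p₁)/ū. Then the 2×2 matrix identity L̃ · M = M̄ · L holds, where L = [[ū − (q₀ − p₀)/u, λ − p₀], [1, 0]], M = [[−(q₀ − p₀)/u, λ − p₀], [1, −u]], L̃ = [[ũ̄ − (q₁ − p₀)/ũ, λ − p₀], [1, 0]], and M̄ = [[−(q₀ − p₁)/ū, λ − p₁], [1, −ū]]. -/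
/-- Lax pair for the non-autonomous discrete KdV equation: if `(u, ū, ũ, ũ̄)`
satisfies the equation, then the compatibility condition `L̃ * M = M̄ * L` holds. -/
theorem nadKdV_lax_pair (lam p₀ p₁ q₀ q₁ u ub ut utb : ℂ)
    (hu : u ≠ 0) (hub : ub ≠ 0) (hut : ut ≠ 0) (hutb : utb ≠ 0)
    (heq : utb - u = (q₁ - p₀) / ut - (q₀ - p₁) / ub) :
    (!![utb - (q₁ - p₀) / ut, lam - p₀; 1, 0] *
        !![-((q₀ - p₀) / u), lam - p₀; 1, -u] : Matrix (Fin 2) (Fin 2) ℂ) =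
      !![-((q₀ - p₁) / ub), lam - p₁; 1, -ub] *
        !![ub - (q₀ - p₀) / u, lam - p₀; 1, 0] := by
  have h : utb = u + (q₁ - p₀) / ut - (q₀ - p₁) / ub := by linear_combination heq
  subst h
  ext i j
  fin_cases i <;> fin_cases j <;>
    simp [Matrix.mul_apply, Fin.sum_univ_succ] <;> field_simp <;> ring
end

section
/- Let λ ∈ ℂ, let p, q : ℤ → ℂ, and let u, v : ℤ² → ℂ be nowhere-zero functions satisfying, for all (l, m) ∈ ℤ²: (A) u_{l+1,m+1} − u_{l,m} − (q_{m+1} − p_l)/u_{l,m+1} + (q_m − p_{l+1})/u_{l+1,m} = 0; (S) u_{l,m} − v_{l+1,m+1} − (q_m − p_{l+1})/u_{l+1,m} + (λ − p_l)/v_{l,m+1} = 0; (B) (u_{l,m} − v_{l,m})((q_m − p_l)/u_{l,m} + v_{l,m+1}) − q_m + λ = 0; (C) (q_m − p_l)/u_{l,m} − (λ − p_l)/v_{l,m} − u_{l+1,m} + v_{l+1,m} = 0. Then, writing v = v_{l,m}, v̄ = v_{l+1,m}, ṽ = v_{l,m+1}, ṽ̄ = v_{l+1,m+1}, the function v satisfies,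 for all (l, m) ∈ ℤ²: q_m (v v̄ − ṽ ṽ̄)² + (v − ṽ̄)(v̄ − ṽ)(λ − v v̄)(λ − ṽ ṽ̄) + (p_{l+1} v − p_l ṽ̄)(p_l v̄ − p_{l+1} ṽ) − (p_l + p_{l+1})(λ v v̄ + λ ṽ ṽ̄ − 2 v v̄ ṽ ṽ̄) + (p_{l+1} v ṽ + p_l v̄ ṽ̄)(2λ − v v̄ − ṽ ṽ̄) = 0. -/
/-- If `u`, `v` satisfy the broken-cube system of the non-autonomous discrete
KdV equation, then `v` satisfies the associated multi-quadratic quad-equation. -/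
theorem nadKdV_multiquadratic (lam : ℂ) (p q : ℤ → ℂ) (u v : ℤ → ℤ → ℂ)
    (hu : ∀ l m : ℤ, u l m ≠ 0) (hv : ∀ l m : ℤ, v l m ≠ 0)
    (hA : ∀ l m : ℤ, u (l+1) (m+1) - u l m - (q (m+1) - p l) / u l (m+1)
            + (q m - p (l+1)) / u (l+1) m = 0)
    (hS : ∀ l m : ℤ, u l m - v (l+1) (m+1) - (q m - p (l+1)) / u (l+1) m
            + (lam - p l) / v l (m+1) = 0)
    (hB : ∀ l m : ℤ, (u l m - v l m) * ((q m - p l) / u l m + v l (m+1)) - q m + lam = 0)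
    (hC : ∀ l m : ℤ, (q m - p l) / u l m - (lam - p l) / v l m
            - u (l+1) m + v (l+1) m = 0) :
    ∀ l m : ℤ,
      q m * (v l m * v (l+1) m - v l (m+1) * v (l+1) (m+1))^2 +
        (v l m - v (l+1) (m+1)) * (v (l+1) m - v l (m+1)) *
          (lam - v l m * v (l+1) m) * (lam - v l (m+1) * v (l+1) (m+1)) +
        (p (l+1) * v l m - p l * v (l+1) (m+1)) * (p l * v (l+1) m - p (l+1) * v l (m+1)) -
        (p l + p (l+1)) * (lam * (v l m * v (l+1) m) + lam * (v l (m+1) * v (l+1) (m+1))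
          - 2 * (v l m * v (l+1) m * v l (m+1) * v (l+1) (m+1))) +
        (p (l+1) * (v l m * v l (m+1)) + p l * (v (l+1) m * v (l+1) (m+1))) *
          (2 * lam - v l m * v (l+1) m - v l (m+1) * v (l+1) (m+1)) = 0 := by
  intro l m
  have ha : u l m ≠ 0 := hu l m
  have hb : u (l+1) m ≠ 0 := hu (l+1) m
  have hV : v l m ≠ 0 := hv l m
  have hVb : v (l+1) m ≠ 0 := hv (l+1) m
  have hVt : v l (m+1) ≠ 0 := hv l (m+1)
  have hVbt : v (l+1) (m+1) ≠ 0 := hv (l+1) (m+1)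
  set p0 := p l with hp0
  set p1 := p (l+1) with hp1
  set qm := q m with hqm
  set V := v l m with hVd
  set Vb := v (l+1) m with hVbd
  set Vt := v l (m+1) with hVtd
  set Vbt := v (l+1) (m+1) with hVbtd
  set a := u l m with had
  set b := u (l+1) m with hbd
  have h1 : a*b*Vt - b*Vt*Vbt - Vt*(qm-p1) + b*(lam-p0) = 0 := by
    have h : a - Vbt - (qm - p1) / b + (lam - p0) / Vt = 0 := hS l m
    field_simp at h
    linear_combination h
  have h2 : Vt*a^2 + (lam - p0 - V*Vt)*a - V*(qm-p0) = 0 := by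
    have h : (a - V) * ((qm - p0) / a + Vt) - qm + lam = 0 := hB l m
    field_simp at h
    linear_combination h
  have h3 : V*(qm-p0) - a*(lam-p0) - a*V*b + a*V*Vb = 0 := by
    have h : (qm - p0) / a - (lam - p0) / V - b + Vb = 0 := hC l m
    field_simp at h
    linear_combination h
  have key : V^2*Vt^5*a^2*b^2 *
      (qm * (V * Vb - Vt * Vbt)^2 +
        (V - Vbt) * (Vb - Vt) * (lam - V * Vb) * (lam - Vt * Vbt) +
        (p1 * V - p0 * Vbt) * (p0 * Vb - p1 * Vt) -
        (p0 + p1) * (lam * (V * Vb) + lam * (Vt * Vbt) - 2 * (V * Vb * Vt * Vbt)) +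
        (p1 * (V * Vt) + p0 * (Vb * Vbt)) * (2 * lam - V * Vb - Vt * Vbt)) = 0 := by
    linear_combination ((-1:ℂ)*V^3*Vb*Vt^6*a^3*b + (-1:ℂ)*V^3*Vb*Vt^6*Vbt*a^2*b + V^3*Vb^2*Vt^5*a^3*b + V^3*Vb^2*Vt^5*Vbt*a^2*b + V^4*Vb*Vt^6*a^2*b + (-1:ℂ)*V^4*Vb^2*Vt^5*a^2*b + (-1:ℂ)*qm*V^2*Vt^6*a^3*b + (-1:ℂ)*qm*V^2*Vt^6*Vbt*a^2*b + (2:ℂ)*qm*V^3*Vb*Vt^5*a^2*b + qm*V^3*Vb*Vt^6*a^2 + (-1:ℂ)*qm*V^3*Vb^2*Vt^5*a^2 + qm^2*V^2*Vt^6*a^2 + p1*V^3*Vt^6*a^2*b + (-2:ℂ)*p1*V^3*Vb*Vt^5*a^2*b + (-1:ℂ)*p1*V^3*Vb*Vt^6*a^2 + p1*V^3*Vb^2*Vt^5*a^2 + (-1:ℂ)*p1*qm*V^2*Vt^6*a^2 + p0*V^2*Vb*Vt^5*a^3*b + p0*V^2*Vb*Vt^5*Vbt*a^2*b + (-1:ℂ)*p0*V^3*Vb*Vt^5*a^2*b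 + p0*qm*V^2*Vt^5*a^2*b + (-1:ℂ)*p0*qm*V^2*Vb*Vt^5*a^2 + (-1:ℂ)*p0*p1*V^2*Vt^5*a^2*b + p0*p1*V^2*Vb*Vt^5*a^2 + lam*V^2*Vt^6*a^3*b + lam*V^2*Vt^6*Vbt*a^2*b + (-1:ℂ)*lam*V^2*Vb*Vt^5*a^3*b + (-1:ℂ)*lam*V^2*Vb*Vt^5*Vbt*a^2*b + (-1:ℂ)*lam*V^3*Vt^6*a^2*b + lam*V^3*Vb*Vt^5*a^2*b + (-1:ℂ)*lam*qm*V^2*Vt^5*a^2*b + (-1:ℂ)*lam*qm*V^2*Vt^6*a^2 + lam*qm*V^2*Vb*Vt^5*a^2 + lam*p1*V^2*Vt^5*a^2*b + lam*p1*V^2*Vt^6*a^2 + (-1:ℂ)*lam*p1*V^2*Vb*Vt^5*a^2) * h1 + (V^3*Vb^3*Vt^6*a^2 + (-1:ℂ)*V^3*Vb^4*Vt^5*a^2 + qm*V^2*Vb^2*Vt^6*a^2 + qm*V^3*Vb^2*Vt^6*a + (-2:ℂ)*qm*V^3*Vb^3*Vt^5*a + (-1:ℂ)*qm^2*V^3*Vb^2*Vt^5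 + p1*V^3*Vb^2*Vt^6*a + (2:ℂ)*p1*qm*V^2*Vb*Vt^6*a + p1*qm*V^3*Vb*Vt^6 + p1^2*qm*V^2*Vt^6 + (2:ℂ)*p0*V^2*Vb^2*Vt^6*a^2 + (-3:ℂ)*p0*V^2*Vb^3*Vt^5*a^2 + (-2:ℂ)*p0*V^3*Vb^2*Vt^6*a + (2:ℂ)*p0*V^3*Vb^3*Vt^5*a + (2:ℂ)*p0*qm*V*Vb*Vt^6*a^2 + (-5:ℂ)*p0*qm*V^2*Vb^2*Vt^5*a + (-1:ℂ)*p0*qm*V^3*Vb*Vt^6 + (2:ℂ)*p0*qm*V^3*Vb^2*Vt^5 + (-2:ℂ)*p0*qm^2*V^2*Vb*Vt^5 + p0*p1*V^2*Vb^2*Vt^5*a + (-1:ℂ)*p0*p1*V^3*Vb*Vt^6 + (2:ℂ)*p0*p1*qm*V*Vt^6*a + (-1:ℂ)*p0*p1*qm*V^2*Vt^6 + p0*p1*qm*V^2*Vb*Vt^5 + (-1:ℂ)*p0*p1^2*V^2*Vt^6 + p0^2*V*Vb*Vt^6*a^2 + (-3:ℂ)*p0^2*V*Vb^2*Vt^5*a^2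 + (-2:ℂ)*p0^2*V^2*Vb*Vt^6*a + (4:ℂ)*p0^2*V^2*Vb^2*Vt^5*a + p0^2*V^3*Vb*Vt^6 + (-1:ℂ)*p0^2*V^3*Vb^2*Vt^5 + p0^2*qm*Vt^6*a^2 + (-1:ℂ)*p0^2*qm*V*Vt^6*a + (-4:ℂ)*p0^2*qm*V*Vb*Vt^5*a + (3:ℂ)*p0^2*qm*V^2*Vb*Vt^5 + (-1:ℂ)*p0^2*qm^2*V*Vt^5 + (-1:ℂ)*p0^2*p1*V*Vt^6*a + (2:ℂ)*p0^2*p1*V*Vb*Vt^5*a + p0^2*p1*V^2*Vt^6 + (-1:ℂ)*p0^2*p1*V^2*Vb*Vt^5 + p0^2*p1*qm*V*Vt^5 + (-1:ℂ)*p0^3*Vb*Vt^5*a^2 + (2:ℂ)*p0^3*V*Vb*Vt^5*a + (-1:ℂ)*p0^3*V^2*Vb*Vt^5 + (-1:ℂ)*p0^3*qm*Vt^5*a + p0^3*qm*V*Vt^5 + p0^3*p1*Vt^5*a + (-1:ℂ)*p0^3*p1*V*Vt^5 + (-3:ℂ)*lam*V^2*Vb^2*Vt^6*a^2 + (3:ℂ)*lam*V^2*Vb^3*Vt^5*a^2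 + (-2:ℂ)*lam*qm*V*Vb*Vt^6*a^2 + (-2:ℂ)*lam*qm*V^2*Vb*Vt^6*a + (5:ℂ)*lam*qm*V^2*Vb^2*Vt^5*a + (2:ℂ)*lam*qm^2*V^2*Vb*Vt^5 + (-2:ℂ)*lam*p1*V^2*Vb*Vt^6*a + (-1:ℂ)*lam*p1*V^2*Vb^2*Vt^5*a + (-2:ℂ)*lam*p1*qm*V*Vt^6*a + (-1:ℂ)*lam*p1*qm*V^2*Vt^6 + (-1:ℂ)*lam*p1*qm*V^2*Vb*Vt^5 + (-4:ℂ)*lam*p0*V*Vb*Vt^6*a^2 + (6:ℂ)*lam*p0*V*Vb^2*Vt^5*a^2 + (4:ℂ)*lam*p0*V^2*Vb*Vt^6*a + (-4:ℂ)*lam*p0*V^2*Vb^2*Vt^5*a + (-2:ℂ)*lam*p0*qm*Vt^6*a^2 + (8:ℂ)*lam*p0*qm*V*Vb*Vt^5*a + lam*p0*qm*V^2*Vt^6 + (-3:ℂ)*lam*p0*qm*V^2*Vb*Vt^5 + (2:ℂ)*lam*p0*qm^2*V*Vt^5 + (-4:ℂ)*lam*p0*p1*V*Vb*Vt^5*a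 + lam*p0*p1*V^2*Vt^6 + lam*p0*p1*V^2*Vb*Vt^5 + (-2:ℂ)*lam*p0*p1*qm*V*Vt^5 + (-1:ℂ)*lam*p0^2*Vt^6*a^2 + (3:ℂ)*lam*p0^2*Vb*Vt^5*a^2 + (2:ℂ)*lam*p0^2*V*Vt^6*a + (-4:ℂ)*lam*p0^2*V*Vb*Vt^5*a + (-1:ℂ)*lam*p0^2*V^2*Vt^6 + lam*p0^2*V^2*Vb*Vt^5 + (3:ℂ)*lam*p0^2*qm*Vt^5*a + (-2:ℂ)*lam*p0^2*qm*V*Vt^5 + (-3:ℂ)*lam*p0^2*p1*Vt^5*a + (2:ℂ)*lam*p0^2*p1*V*Vt^5 + (3:ℂ)*lam^2*V*Vb*Vt^6*a^2 + (-3:ℂ)*lam^2*V*Vb^2*Vt^5*a^2 + lam^2*qm*Vt^6*a^2 + lam^2*qm*V*Vt^6*a + (-4:ℂ)*lam^2*qm*V*Vb*Vt^5*a + (-1:ℂ)*lam^2*qm^2*V*Vt^5 + lam^2*p1*V*Vt^6*a + (2:ℂ)*lam^2*p1*V*Vb*Vt^5*a + lam^2*p1*qm*V*Vt^5 + (2:ℂ)*lam^2*p0*Vt^6*a^2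 + (-3:ℂ)*lam^2*p0*Vb*Vt^5*a^2 + (-2:ℂ)*lam^2*p0*V*Vt^6*a + (2:ℂ)*lam^2*p0*V*Vb*Vt^5*a + (-3:ℂ)*lam^2*p0*qm*Vt^5*a + lam^2*p0*qm*V*Vt^5 + (3:ℂ)*lam^2*p0*p1*Vt^5*a + (-1:ℂ)*lam^2*p0*p1*V*Vt^5 + (-1:ℂ)*lam^3*Vt^6*a^2 + lam^3*Vb*Vt^5*a^2 + lam^3*qm*Vt^5*a + (-1:ℂ)*lam^3*p1*Vt^5*a) * h2 + ((-1:ℂ)*V^2*Vb*Vt^7*a^3*b + V^2*Vb^2*Vt^6*a^3*b + (-1:ℂ)*V^2*Vb^2*Vt^7*a^3 + V^2*Vb^3*Vt^6*a^3 + V^3*Vb*Vt^7*a^2*b + (-1:ℂ)*V^3*Vb^2*Vt^6*a^2*b + V^3*Vb^2*Vt^7*a^2 + (-1:ℂ)*V^3*Vb^3*Vt^6*a^2 + (-1:ℂ)*qm*V*Vt^7*a^3*b + (-1:ℂ)*qm*V*Vb*Vt^7*a^3 + (2:ℂ)*qm*V^2*Vb*Vt^6*a^2*b + qm*V^2*Vb*Vt^7*a^2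 + qm*V^2*Vb^2*Vt^6*a^2 + (-1:ℂ)*qm*V^3*Vb^2*Vt^5*a*b + (-1:ℂ)*qm*V^3*Vb^3*Vt^5*a + qm^2*V*Vt^7*a^2 + (-1:ℂ)*qm^2*V^3*Vb^2*Vt^5 + p1*V^2*Vt^7*a^2*b + (-2:ℂ)*p1*V^2*Vb*Vt^6*a^2*b + (-1:ℂ)*p1*V^2*Vb*Vt^7*a^2 + p1*V^3*Vb*Vt^6*a*b + p1*V^3*Vb*Vt^7*a + (-2:ℂ)*p1*qm*V*Vt^7*a^2 + (2:ℂ)*p1*qm*V^2*Vb*Vt^6*a + p1*qm*V^3*Vb*Vt^6 + p1^2*V^2*Vt^6*a*b + p1^2*V^2*Vt^7*a + (-1:ℂ)*p1^2*V^2*Vb*Vt^6*a + p1^2*qm*V^2*Vt^6 + p0*V*Vb*Vt^6*a^3*b + (-1:ℂ)*p0*V*Vb*Vt^7*a^3 + (2:ℂ)*p0*V*Vb^2*Vt^6*a^3 + (2:ℂ)*p0*V^2*Vb*Vt^7*a^2 + (-1:ℂ)*p0*V^2*Vb^2*Vt^5*a^2*b + (-2:ℂ)*p0*V^2*Vb^2*Vt^6*a^2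 + (-1:ℂ)*p0*V^2*Vb^3*Vt^5*a^2 + (-1:ℂ)*p0*V^3*Vb*Vt^6*a*b + (-1:ℂ)*p0*V^3*Vb*Vt^7*a + p0*V^3*Vb^2*Vt^5*a*b + p0*V^3*Vb^3*Vt^5*a + (-1:ℂ)*p0*qm*Vt^7*a^3 + (2:ℂ)*p0*qm*V*Vt^6*a^2*b + p0*qm*V*Vt^7*a^2 + (3:ℂ)*p0*qm*V*Vb*Vt^6*a^2 + (-2:ℂ)*p0*qm*V^2*Vb*Vt^5*a*b + (-2:ℂ)*p0*qm*V^2*Vb*Vt^6*a + (-3:ℂ)*p0*qm*V^2*Vb^2*Vt^5*a + (-1:ℂ)*p0*qm*V^3*Vb*Vt^6 + (2:ℂ)*p0*qm*V^3*Vb^2*Vt^5 + (-2:ℂ)*p0*qm^2*V^2*Vb*Vt^5 + (-1:ℂ)*p0*p1*V*Vt^6*a^2*b + p0*p1*V*Vt^7*a^2 + (-1:ℂ)*p0*p1*V*Vb*Vt^6*a^2 + (-1:ℂ)*p0*p1*V^2*Vt^6*a*b + (-1:ℂ)*p0*p1*V^2*Vt^7*a + p0*p1*V^2*Vb*Vt^5*a*b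 + (2:ℂ)*p0*p1*V^2*Vb*Vt^6*a + (-1:ℂ)*p0*p1*V^3*Vb*Vt^6 + (2:ℂ)*p0*p1*qm*V*Vt^6*a + (-1:ℂ)*p0*p1*qm*V^2*Vt^6 + p0*p1*qm*V^2*Vb*Vt^5 + (-1:ℂ)*p0*p1^2*V^2*Vt^6 + p0^2*Vb*Vt^6*a^3 + (-1:ℂ)*p0^2*V*Vb*Vt^5*a^2*b + (-1:ℂ)*p0^2*V*Vb*Vt^6*a^2 + (-2:ℂ)*p0^2*V*Vb^2*Vt^5*a^2 + p0^2*V^2*Vb*Vt^5*a*b + (-1:ℂ)*p0^2*V^2*Vb*Vt^6*a + (3:ℂ)*p0^2*V^2*Vb^2*Vt^5*a + p0^2*V^3*Vb*Vt^6 + (-1:ℂ)*p0^2*V^3*Vb^2*Vt^5 + (2:ℂ)*p0^2*qm*Vt^6*a^2 + (-1:ℂ)*p0^2*qm*V*Vt^5*a*b + (-2:ℂ)*p0^2*qm*V*Vt^6*a + (-3:ℂ)*p0^2*qm*V*Vb*Vt^5*a + (3:ℂ)*p0^2*qm*V^2*Vb*Vt^5 + (-1:ℂ)*p0^2*qm^2*V*Vt^5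 + (-1:ℂ)*p0^2*p1*Vt^6*a^2 + p0^2*p1*V*Vt^5*a*b + p0^2*p1*V*Vb*Vt^5*a + p0^2*p1*V^2*Vt^6 + (-1:ℂ)*p0^2*p1*V^2*Vb*Vt^5 + p0^2*p1*qm*V*Vt^5 + (-1:ℂ)*p0^3*Vb*Vt^5*a^2 + (2:ℂ)*p0^3*V*Vb*Vt^5*a + (-1:ℂ)*p0^3*V^2*Vb*Vt^5 + (-1:ℂ)*p0^3*qm*Vt^5*a + p0^3*qm*V*Vt^5 + p0^3*p1*Vt^5*a + (-1:ℂ)*p0^3*p1*V*Vt^5 + lam*V*Vt^7*a^3*b + (-1:ℂ)*lam*V*Vb*Vt^6*a^3*b + (2:ℂ)*lam*V*Vb*Vt^7*a^3 + (-2:ℂ)*lam*V*Vb^2*Vt^6*a^3 + (-1:ℂ)*lam*V^2*Vt^7*a^2*b + (-2:ℂ)*lam*V^2*Vb*Vt^7*a^2 + lam*V^2*Vb^2*Vt^5*a^2*b + lam*V^2*Vb^2*Vt^6*a^2 + lam*V^2*Vb^3*Vt^5*a^2 + lam*qm*Vt^7*a^3 + (-2:ℂ)*lam*qm*V*Vt^6*a^2*b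 + (-1:ℂ)*lam*qm*V*Vt^7*a^2 + (-3:ℂ)*lam*qm*V*Vb*Vt^6*a^2 + (2:ℂ)*lam*qm*V^2*Vb*Vt^5*a*b + (3:ℂ)*lam*qm*V^2*Vb^2*Vt^5*a + (2:ℂ)*lam*qm^2*V^2*Vb*Vt^5 + lam*p1*V*Vt^6*a^2*b + lam*p1*V*Vt^7*a^2 + lam*p1*V*Vb*Vt^6*a^2 + (-1:ℂ)*lam*p1*V^2*Vt^6*a*b + (-1:ℂ)*lam*p1*V^2*Vt^7*a + (-1:ℂ)*lam*p1*V^2*Vb*Vt^5*a*b + (-2:ℂ)*lam*p1*V^2*Vb*Vt^6*a + (-2:ℂ)*lam*p1*qm*V*Vt^6*a + (-1:ℂ)*lam*p1*qm*V^2*Vt^6 + (-1:ℂ)*lam*p1*qm*V^2*Vb*Vt^5 + lam*p0*Vt^7*a^3 + (-2:ℂ)*lam*p0*Vb*Vt^6*a^3 + (-1:ℂ)*lam*p0*V*Vt^6*a^2*b + (-2:ℂ)*lam*p0*V*Vt^7*a^2 + (2:ℂ)*lam*p0*V*Vb*Vt^5*a^2*b + (4:ℂ)*lam*p0*V*Vb^2*Vt^5*a^2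 + lam*p0*V^2*Vt^6*a*b + lam*p0*V^2*Vt^7*a + (-1:ℂ)*lam*p0*V^2*Vb*Vt^5*a*b + (2:ℂ)*lam*p0*V^2*Vb*Vt^6*a + (-3:ℂ)*lam*p0*V^2*Vb^2*Vt^5*a + (-4:ℂ)*lam*p0*qm*Vt^6*a^2 + (2:ℂ)*lam*p0*qm*V*Vt^5*a*b + (2:ℂ)*lam*p0*qm*V*Vt^6*a + (6:ℂ)*lam*p0*qm*V*Vb*Vt^5*a + lam*p0*qm*V^2*Vt^6 + (-3:ℂ)*lam*p0*qm*V^2*Vb*Vt^5 + (2:ℂ)*lam*p0*qm^2*V*Vt^5 + (2:ℂ)*lam*p0*p1*Vt^6*a^2 + (-2:ℂ)*lam*p0*p1*V*Vt^5*a*b + (-2:ℂ)*lam*p0*p1*V*Vt^6*a + (-2:ℂ)*lam*p0*p1*V*Vb*Vt^5*a + lam*p0*p1*V^2*Vt^6 + lam*p0*p1*V^2*Vb*Vt^5 + (-2:ℂ)*lam*p0*p1*qm*V*Vt^5 + (-1:ℂ)*lam*p0^2*Vt^6*a^2 + (3:ℂ)*lam*p0^2*Vb*Vt^5*a^2 +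 (2:ℂ)*lam*p0^2*V*Vt^6*a + (-4:ℂ)*lam*p0^2*V*Vb*Vt^5*a + (-1:ℂ)*lam*p0^2*V^2*Vt^6 + lam*p0^2*V^2*Vb*Vt^5 + (3:ℂ)*lam*p0^2*qm*Vt^5*a + (-2:ℂ)*lam*p0^2*qm*V*Vt^5 + (-3:ℂ)*lam*p0^2*p1*Vt^5*a + (2:ℂ)*lam*p0^2*p1*V*Vt^5 + (-1:ℂ)*lam^2*Vt^7*a^3 + lam^2*Vb*Vt^6*a^3 + lam^2*V*Vt^6*a^2*b + lam^2*V*Vt^7*a^2 + (-1:ℂ)*lam^2*V*Vb*Vt^5*a^2*b + lam^2*V*Vb*Vt^6*a^2 + (-2:ℂ)*lam^2*V*Vb^2*Vt^5*a^2 + (2:ℂ)*lam^2*qm*Vt^6*a^2 + (-1:ℂ)*lam^2*qm*V*Vt^5*a*b + (-3:ℂ)*lam^2*qm*V*Vb*Vt^5*a + (-1:ℂ)*lam^2*qm^2*V*Vt^5 + (-1:ℂ)*lam^2*p1*Vt^6*a^2 + lam^2*p1*V*Vt^5*a*b + (2:ℂ)*lam^2*p1*V*Vt^6*a + lam^2*p1*V*Vb*Vt^5*a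 + lam^2*p1*qm*V*Vt^5 + (2:ℂ)*lam^2*p0*Vt^6*a^2 + (-3:ℂ)*lam^2*p0*Vb*Vt^5*a^2 + (-2:ℂ)*lam^2*p0*V*Vt^6*a + (2:ℂ)*lam^2*p0*V*Vb*Vt^5*a + (-3:ℂ)*lam^2*p0*qm*Vt^5*a + lam^2*p0*qm*V*Vt^5 + (3:ℂ)*lam^2*p0*p1*Vt^5*a + (-1:ℂ)*lam^2*p0*p1*V*Vt^5 + (-1:ℂ)*lam^3*Vt^6*a^2 + lam^3*Vb*Vt^5*a^2 + lam^3*qm*Vt^5*a + (-1:ℂ)*lam^3*p1*Vt^5*a) * h3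
  have hm : V^2*Vt^5*a^2*b^2 ≠ 0 :=
    mul_ne_zero (mul_ne_zero (mul_ne_zero (pow_ne_zero _ hV) (pow_ne_zero _ hVt))
      (pow_ne_zero _ ha)) (pow_ne_zero _ hb)
  have := (mul_eq_zero.mp key).resolve_left hm
  linear_combination this
end

section
/- Let λ ∈ ℂ, p, q : ℤ → ℂ, and a, b : ℤ → ℂ with a_l² = p_l − λ and b_m² = q_m − λ for all l, m, with a_l ≠ 0 and b_m ≠ 0. Let φ : ℤ² → ℂ be nowhere zero and satisfy the non-autonomous lattice potential mKdV equation φ_{l+1,m+1} (b_m φ_{l,m+1} − a_l φ_{l+1,m}) = φ_{l,m} (b_m φ_{l+1,m} − a_l φ_{l,m+1}) for all (l, m) ∈ ℤ². Assume also a_l φ_{l+1,m} − b_m φ_{l,m+1} ≠ 0 for all (l, m). Then u : ℤ² → ℂ defined by u_{l,m} = (a_l φ_{l+1,m} − b_m φ_{l,m+1}) / φ_{l,m} satisfies the non-autonomous discrete KdV equation u_{l+1,m+1} − u_{l,m} = (q_{m+1} − p_l)/u_{l,m+1} − (q_m − p_{l+1})/u_{l+1,m} for all (l, m) ∈ ℤ².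 -/
/-- A solution of the non-autonomous lattice potential mKdV equation yields a
solution of the non-autonomous discrete KdV equation via
`u_{l,m} = (a_l φ_{l+1,m} - b_m φ_{l,m+1}) / φ_{l,m}`. -/
theorem nalmKdV_to_nadKdV (lam : ℂ) (p q a b : ℤ → ℂ)
    (ha : ∀ l : ℤ, (a l)^2 = p l - lam) (hb : ∀ m : ℤ, (b m)^2 = q m - lam)
    (ha0 : ∀ l : ℤ, a l ≠ 0) (hb0 : ∀ m : ℤ, b m ≠ 0)
    (φ : ℤ → ℤ → ℂ) (hφ : ∀ l m : ℤ, φ l m ≠ 0)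
    (hmkdv : ∀ l m : ℤ,
      φ (l+1) (m+1) * (b m * φ l (m+1) - a l * φ (l+1) m) =
        φ l m * (b m * φ (l+1) m - a l * φ l (m+1)))
    (hne : ∀ l m : ℤ, a l * φ (l+1) m - b m * φ l (m+1) ≠ 0)
    (u : ℤ → ℤ → ℂ)
    (hu : ∀ l m : ℤ, u l m = (a l * φ (l+1) m - b m * φ l (m+1)) / φ l m) :
    ∀ l m : ℤ,
      u (l+1) (m+1) - u l m = (q (m+1) - p l) / u l (m+1) - (q m - p (l+1)) / u (l+1) m := by
  -- cleared-denominator form of `hu`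
  have hu' : ∀ l m : ℤ, u l m * φ l m = a l * φ (l+1) m - b m * φ l (m+1) := by
    intro l m
    rw [hu l m, div_mul_cancel₀ _ (hφ l m)]
  -- alternate expression for `u` obtained from the mKdV equation
  have key : ∀ l m : ℤ, u l m * φ (l+1) (m+1) = a l * φ l (m+1) - b m * φ (l+1) m := by
    intro l m
    rw [hu l m, div_mul_eq_mul_div, div_eq_iff (hφ l m)]
    linear_combination - hmkdv l m
  have un : ∀ l m : ℤ, u l m ≠ 0 := by
    intro l m
    rw [hu l m]
    exact div_ne_zero (hne l m) (hφ l m)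
  intro l m
  have t1 : (q (m+1) - p l) / u l (m+1) =
      -(a l * φ l (m+1) + b (m+1) * φ (l+1) (m+2)) / φ (l+1) (m+1) := by
    rw [div_eq_div_iff (un l (m+1)) (hφ (l+1) (m+1))]
    have k1 := key l (m+1)
    have h1 := hu' l (m+1)
    rw [show ((m:ℤ)+1+1) = m+2 by ring] at k1 h1
    linear_combination (- φ (l+1) (m+1)) * (hb (m+1)) + (φ (l+1) (m+1)) * (ha l)
      + a l * h1 + b (m+1) * k1
  have t2 : (q m - p (l+1)) / u (l+1) m =
      -(a (l+1) * φ (l+2) (m+1) + b m * φ (l+1) m) / φ (l+1) (m+1) := by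
    rw [div_eq_div_iff (un (l+1) m) (hφ (l+1) (m+1))]
    have k2 := key (l+1) m
    have h2 := hu' (l+1) m
    rw [show ((l:ℤ)+1+1) = l+2 by ring] at k2 h2
    linear_combination (- φ (l+1) (m+1)) * (hb m) + (φ (l+1) (m+1)) * (ha (l+1))
      + b m * h2 + a (l+1) * k2
  have h00 : u l m = (a l * φ l (m+1) - b m * φ (l+1) m) / φ (l+1) (m+1) :=
    (eq_div_iff (hφ (l+1) (m+1))).mpr (key l m)
  rw [t1, t2, h00, hu (l+1) (m+1)]
  have h2 : (l:ℤ) + 1 + 1 = l + 2 := by ring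
  have h2' : (m:ℤ) + 1 + 1 = m + 2 := by ring
  rw [h2, h2']
  field_simp
  ring
end

section
/- Lax pair for the lattice sine-Gordon equation: fix γ, λ ∈ ℂ and u, ū, ũ, ũ̄ ∈ ℂ with ū ≠ 0, ũ̄ ≠ 0, γ − u ≠ 0, γ − ū ≠ 0, γ − ũ ≠ 0, satisfying the lattice sine-Gordon equation ũ̄ (γ − ũ)(γ ū − 1) = u (γ ũ − 1)(γ − ū). Then the 2×2 matrix identity L̃ · M = M̄ · L holds, where L = [[γ + γ(γ u − 1)/((γ − u) ū), λ(γ u − 1)/((γ − u) ū)], [1, 0]], M = [[(γ² − 1) u/(γ − u), λ(γ u − 1)/(γ − u)], [u, 1 − γ u]], L̃ = [[γ + γ(γ ũ − 1)/((γ − ũ) ũ̄), λ(γ ũ − 1)/((γ − ũ) ũ̄)], [1, 0]], and M̄ = [[(γ² − 1) ū/(γ − ū), λ(γ ū − 1)/(γ − ū)], [ū, 1 − γ ū]]. -/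
/-- Lax pair for the lattice sine-Gordon equation: if `(u, ū, ũ, ũ̄)` satisfies
the lattice sine-Gordon equation, then the compatibility condition
`L̃ * M = M̄ * L` of the Lax matrices holds. -/
theorem sineGordon_lax_pair (γ lam u ub ut utb : ℂ)
    (hub : ub ≠ 0) (hutb : utb ≠ 0)
    (hgu : γ - u ≠ 0) (hgub : γ - ub ≠ 0) (hgut : γ - ut ≠ 0)
    (heq : utb * ((γ - ut) * (γ * ub - 1)) = u * ((γ * ut - 1) * (γ - ub))) :
    (!![γ + γ * (γ * ut - 1) / ((γ - ut) * utb), lam * (γ * ut - 1) / ((γ - ut) * utb);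
        1, 0] *
      !![(γ^2 - 1) * u / (γ - u), lam * (γ * u - 1) / (γ - u);
        u, 1 - γ * u] : Matrix (Fin 2) (Fin 2) ℂ) =
    !![(γ^2 - 1) * ub / (γ - ub), lam * (γ * ub - 1) / (γ - ub);
        ub, 1 - γ * ub] *
      !![γ + γ * (γ * u - 1) / ((γ - u) * ub), lam * (γ * u - 1) / ((γ - u) * ub);
        1, 0] := by
  ext i j
  fin_cases i <;> fin_cases j <;>
    simp only [Matrix.mul_apply, Fin.sum_univ_succ, Fin.sum_univ_zero,
      Matrix.cons_val_zero, Matrix.cons_val_one, Matrix.head_cons, Matrix.head_fin_const,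
      Matrix.cons_val', Matrix.empty_val', Matrix.cons_val_fin_one, Fin.isValue,
      add_zero, mul_one, mul_zero, zero_mul, one_mul, zero_add, Matrix.of_apply,
      Fin.zero_eta, Fin.mk_one, Fin.succ_zero_eq_one, Matrix.cons_val_succ]
  · field_simp
    linear_combination (-(γ*(γ^2-1)+(γ-u)*lam)) * heq
  · field_simp
    linear_combination (-lam*(γ*u-1)) * heq
  · field_simp
    ring
  · field_simp
end

section
/- Let γ, λ ∈ ℂ and let u, v : ℤ² → ℂ be nowhere-zero functions with γ − u_{l,m} ≠ 0 for all (l, m), satisfying, for all (l, m) ∈ ℤ²: (A) u_{l+1,m+1} (γ − u_{l,m+1})(γ u_{l+1,m} − 1) = u_{l,m} (γ u_{l,m+1} − 1)(γ − u_{l+1,m}); (S) (1 − γ u_{l+1,m})(λ + γ v_{l,m+1}) − (γ − u_{l+1,m})(γ − v_{l+1,m+1}) u_{l,m} v_{l,m+1} = 0; (B) (λ + γ v_{l,m+1} − u_{l,m} v_{l,m+1})(1 − γ u_{l,m} + u_{l,m} v_{l,m}) + (1 − γ² − λ) u_{l,m} v_{l,m} = 0; (C) (1 − γ u_{l,m})(λ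 + γ v_{l,m}) − (γ − u_{l,m})(γ − v_{l+1,m}) u_{l+1,m} v_{l,m} = 0. Then, writing v = v_{l,m}, v̄ = v_{l+1,m}, ṽ = v_{l,m+1}, ṽ̄ = v_{l+1,m+1}, the function v satisfies, for all (l, m) ∈ ℤ²: γ² (v − ṽ̄)(v̄ − ṽ)(λ + v v̄)(λ + ṽ ṽ̄) − (1 − γ²)(γ² − λ)(v v̄ − ṽ ṽ̄)² + γ(1 − γ²)(v v̄ − ṽ ṽ̄)((λ + v v̄)(ṽ + ṽ̄) − (v + v̄)(λ + ṽ ṽ̄)) = 0. -/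
set_option maxHeartbeats 4000000 in
/-- If `u`, `v` satisfy the broken-cube system of the lattice sine-Gordon
equation, then `v` satisfies the associated multi-quadratic quad-equation. -/
theorem sineGordon_multiquadratic (γ lam : ℂ) (u v : ℤ → ℤ → ℂ)
    (hu : ∀ l m : ℤ, u l m ≠ 0) (hv : ∀ l m : ℤ, v l m ≠ 0)
    (hgu : ∀ l m : ℤ, γ - u l m ≠ 0)
    (hA : ∀ l m : ℤ, u (l+1) (m+1) * ((γ - u l (m+1)) * (γ * u (l+1) m - 1)) =
            u l m * ((γ * u l (m+1) - 1) * (γ - u (l+1) m)))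
    (hS : ∀ l m : ℤ, (1 - γ * u (l+1) m) * (lam + γ * v l (m+1)) -
            (γ - u (l+1) m) * (γ - v (l+1) (m+1)) * (u l m * v l (m+1)) = 0)
    (hB : ∀ l m : ℤ, (lam + γ * v l (m+1) - u l m * v l (m+1)) *
            (1 - γ * u l m + u l m * v l m) + (1 - γ^2 - lam) * (u l m * v l m) = 0)
    (hC : ∀ l m : ℤ, (1 - γ * u l m) * (lam + γ * v l m) -
            (γ - u l m) * (γ - v (l+1) m) * (u (l+1) m * v l m) = 0) :
    ∀ l m : ℤ,
      γ^2 * (v l m - v (l+1) (m+1)) * (v (l+1) m - v l (m+1)) *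
          (lam + v l m * v (l+1) m) * (lam + v l (m+1) * v (l+1) (m+1)) -
        (1 - γ^2) * (γ^2 - lam) *
          (v l m * v (l+1) m - v l (m+1) * v (l+1) (m+1))^2 +
        γ * (1 - γ^2) * (v l m * v (l+1) m - v l (m+1) * v (l+1) (m+1)) *
          ((lam + v l m * v (l+1) m) * (v l (m+1) + v (l+1) (m+1)) -
            (v l m + v (l+1) m) * (lam + v l (m+1) * v (l+1) (m+1))) = 0 := by
  intro l m
  have ha : u l m ≠ 0 := hu l m
  have hb : u (l+1) m ≠ 0 := hu (l+1) m
  have hp : v l m ≠ 0 := hv l m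
  have hr : v l (m+1) ≠ 0 := hv l (m+1)
  have hga : γ - u l m ≠ 0 := hgu l m
  have hgb : γ - u (l+1) m ≠ 0 := hgu (l+1) m
  have eS := hS l m
  have eB := hB l m
  have eC := hC l m
  set a := u l m with hadef
  set b := u (l+1) m with hbdef
  set p := v l m with hpdef
  set q := v (l+1) m with hqdef
  set r := v l (m+1) with hrdef
  set s := v (l+1) (m+1) with hsdef
  by_cases hgp : lam + γ * p = 0
  · have h1 : (γ - a) * ((γ - q) * (b * p)) = 0 := by
      linear_combination (1 - γ*a) * hgp - eC
    have h2 : (γ - q) * (b * p) = 0 := (mul_eq_zero.mp h1).resolve_left hga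
    have h3 : γ - q = 0 := (mul_eq_zero.mp h2).resolve_right (mul_ne_zero hb hp)
    have hq' : q = γ := (sub_eq_zero.mp h3).symm
    linear_combination (1*r^2*s^2 + (-2)*p*q*r*s + 1*p^2*q^2 + (-1)*γ*r*s^2 + (-1)*γ*r^2*s + 1*γ*q*r*s + 1*γ*p*r*s + 1*γ*p*q*s + 1*γ*p*q*r + (-1)*γ*p*q^2 + (-1)*γ*p^2*q + (-1)*γ^2*q*r*s^2 + (-1)*γ^2*p*r^2*s + 4*γ^2*p*q*r*s + (-1)*γ^2*p*q^2*s + (-1)*γ^2*p^2*q*r + 1*γ^2*lam*r*s + (-1)*γ^2*lam*q*s + (-1)*γ^2*lam*p*r + 1*γ^2*lam*p*q + 1*γ^3*r*s^2 + 1*γ^3*r^2*s + (-1)*γ^3*q*r*s + (-2)*γ^3*p*r*s + (-1)*γ^3*p*q*r + 1*γ^3*p*q^2 + 1*γ^3*p^2*r) * hgp + (1*γ*r^2*s^2 + (-1)*γ*p*r*s^2 + (-1)*γ*p*r^2*s + (-1)*γ*p*q*r*s + 1*γ*p^2*r*s + 1*γ*p^2*q*s + 1*γ*p^2*q*r + (-1)*γ*p^3*q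 + 1*γ^2*p*r^2*s^2 + (-1)*γ^2*p*q*r*s^2 + (-1)*γ^2*p^2*r^2*s + 1*γ^2*p^2*q*r*s + (-1)*γ^3*r^2*s^2 + 1*γ^3*p*r*s^2 + 1*γ^3*p*r^2*s + 1*γ^3*p*q*r*s + (-2)*γ^3*p^2*r*s + (-1)*γ^3*p^2*q*r + 1*γ^3*p^3*r) * hq'
  by_cases hgr : lam + γ * r = 0
  · have h1 : (γ - b) * ((γ - s) * (a * r)) = 0 := by
      linear_combination (1 - γ*b) * hgr - eS
    have h2 : (γ - s) * (a * r) = 0 := (mul_eq_zero.mp h1).resolve_left hgb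
    have h3 : γ - s = 0 := (mul_eq_zero.mp h2).resolve_right (mul_ne_zero ha hr)
    have hs' : s = γ := (sub_eq_zero.mp h3).symm
    linear_combination (1*r^2*s^2 + (-2)*p*q*r*s + 1*p^2*q^2 + (-1)*γ*r*s^2 + (-1)*γ*r^2*s + 1*γ*q*r*s + 1*γ*p*r*s + 1*γ*p*q*s + 1*γ*p*q*r + (-1)*γ*p*q^2 + (-1)*γ*p^2*q + (-1)*γ^2*q*r*s^2 + (-1)*γ^2*p*r^2*s + 4*γ^2*p*q*r*s + (-1)*γ^2*p*q^2*s + (-1)*γ^2*p^2*q*r + 1*γ^2*lam*r*s + (-1)*γ^2*lam*q*s + (-1)*γ^2*lam*p*r + 1*γ^2*lam*p*q + 1*γ^3*r*s^2 + (-1)*γ^3*p*r*s + 1*γ^3*p*r^2 + (-1)*γ^3*p*q*s + (-2)*γ^3*p*q*r + 1*γ^3*p*q^2 + 1*γ^3*p^2*q) * hgr + ((-1)*γ*r^3*s + 1*γ*q*r^2*s + 1*γ*p*r^2*s + (-1)*γ*p*q*r*s + 1*γ*p*q*r^2 + (-1)*γ*p*q^2*r + (-1)*γ*p^2*q*r +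 1*γ*p^2*q^2 + 1*γ^2*p*q*r^2*s + (-1)*γ^2*p*q^2*r*s + (-1)*γ^2*p^2*q*r^2 + 1*γ^2*p^2*q^2*r + (-1)*γ^3*p*r^2*s + 1*γ^3*p*r^3 + 1*γ^3*p*q*r*s + (-2)*γ^3*p*q*r^2 + 1*γ^3*p*q^2*r + 1*γ^3*p^2*q*r + (-1)*γ^3*p^2*q^2) * hs'
  by_cases hg2 : γ^2 = 1
  · have h1 : (γ - 1) * (γ + 1) = 0 := by linear_combination hg2
    rcases mul_eq_zero.mp h1 with h | h
    · have hγ : γ = 1 := by linear_combination h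
      subst hγ
      apply mul_left_cancel₀ (mul_ne_zero ha hga)
      linear_combination ((-1)*p*r*s + (-1)*p*q + 1*p*q*s + 1*p*q*r*s + 1*p*q^2 + (-1)*p*q^2*s + (-1)*lam*p + 1*lam*p*q + 1*a*p*r*s + 2*a*p*q + (-1)*a*p*q*s + (-1)*a*p*q*r*s + (-2)*a*p*q^2 + 1*a*p*q^2*s + (-1)*a*p^2*q + 1*a*p^2*q^2 + 1*a*lam*p + (-1)*a*lam*p*q + (-1)*a^2*p*q + 1*a^2*p*q^2 + 1*a^2*p^2*q + (-1)*a^2*p^2*q^2) * eS + ((-1)*p*q*r*s + (-1)*p*q^2 + 1*p*q^2*s + (-1)*lam*r*s + (-1)*lam*q + 1*lam*q*s + (-1)*lam*p*q + (-1)*lam^2 + (-1)*a*p*q + 1*a*p*q*s + 1*a*p*q^2 + (-1)*a*p*q^2*s + 1*a*b*p*q + (-1)*a*b*p*q*s + (-1)*a*b*p*q^2 + 1*a*b*p*q^2*s) * eB + (1*r^2*s + 1*q*r + (-1)*q*r*s + 1*lam*r + 1*lam*r*s + 1*lam*q + (-1)*lam*q*s + 1*lam^2 + (-1)*a*r^2*s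 + 1*a*r^2*s^2 + (-1)*a*q*r + 1*a*q*r*s + (-1)*a*q*r*s^2 + 1*a*p*q*r + (-1)*a*lam*r + 1*a*lam*r*s + (-1)*a*lam*q*s + 1*a*lam*p*q) * eC
    · have hγ : γ = -1 := by linear_combination h
      subst hγ
      apply mul_left_cancel₀ (mul_ne_zero ha hga)
      linear_combination (1*p*r*s + (-1)*p*q + (-1)*p*q*s + 1*p*q*r*s + (-1)*p*q^2 + (-1)*p*q^2*s + 1*lam*p + 1*lam*p*q + 1*a*p*r*s + (-2)*a*p*q + (-1)*a*p*q*s + 1*a*p*q*r*s + (-2)*a*p*q^2 + (-1)*a*p*q^2*s + (-1)*a*p^2*q + (-1)*a*p^2*q^2 + 1*a*lam*p + 1*a*lam*p*q + (-1)*a^2*p*q + (-1)*a^2*p*q^2 + (-1)*a^2*p^2*q + (-1)*a^2*p^2*q^2) * eS + ((-1)*p*q*r*s + 1*p*q^2 + 1*p*q^2*s + (-1)*lam*r*s + 1*lam*q + 1*lam*q*s + (-1)*lam*p*q + (-1)*lam^2 + 1*a*p*q + 1*a*p*q*s + 1*a*p*q^2 + 1*a*p*q^2*s + 1*a*b*p*q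 + 1*a*b*p*q*s + 1*a*b*p*q^2 + 1*a*b*p*q^2*s) * eB + ((-1)*r^2*s + 1*q*r + 1*q*r*s + (-1)*lam*r + 1*lam*r*s + (-1)*lam*q + (-1)*lam*q*s + 1*lam^2 + (-1)*a*r^2*s + (-1)*a*r^2*s^2 + 1*a*q*r + 1*a*q*r*s + 1*a*q*r*s^2 + 1*a*p*q*r + (-1)*a*lam*r + (-1)*a*lam*r*s + 1*a*lam*q*s + (-1)*a*lam*p*q) * eC
  · have hg1 : γ^2 - 1 ≠ 0 := sub_ne_zero.mpr hg2
    have hR : ((-1)*lam*a*r*s + 1*lam*a*p*q + (-1)*γ*a*p*r*s + 1*γ*a*p*q*r + 1*γ*a^2*p*q*r*s + (-1)*γ*lam*p*q + 1*γ*lam*a*r + (-1)*γ*lam*a*p + 1*γ*lam*a^2*r*s + (-1)*γ*lam^2 + (-1)*γ^2*p*q*r + (-1)*γ^2*a*p*q*r*s + (-1)*γ^2*a^2*p*q*r + (-1)*γ^2*lam*r + (-1)*γ^2*lam*a^2*r + 1*γ^2*lam^2*a + 1*γ^3*a*p*r*s + 1*γ^3*a*p*q*r + 1*γ^3*lam*a*r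 + 1*γ^3*lam*a*p) = 0 := by
      linear_combination ((-1)*a*r*s + 1*γ*a*r + (-1)*γ*lam + (-1)*γ^2*r) * eC - ((-1)*a*p*q + 1*γ*p*q + 1*γ*a*p + (-1)*γ^2*p) * eS
    apply mul_left_cancel₀
      (mul_ne_zero hg1 (mul_ne_zero hgp (mul_ne_zero hgr (mul_ne_zero hp hr))))
    linear_combination (1*lam*p*r^3*s + (-1)*lam*p^2*r^2*s + (-1)*lam*p^2*q*r^2 + 1*lam*p^3*q*r + 1*lam*a*p^2*r^3*s + (-1)*lam*a*p^3*q*r^2 + 1*γ*p*q*r^3*s + 1*γ*p^2*r^3*s + (-2)*γ*p^2*q*r^2*s + (-1)*γ*p^2*q*r^3 + (-1)*γ*p^3*r^2*s + 1*γ*p^3*q*r*s + 1*γ*p^3*q*r^2 + 1*γ*a*p^2*q*r^3*s + 1*γ*a*p^3*r^3*s + (-1)*γ*a*p^3*q*r^2*s + (-1)*γ*a*p^3*q*r^3 + (-1)*γ*lam*p*r^2*s + (-1)*γ*lam*p*r^3 + 1*γ*lam*p*q*r^2 + 1*γ*lam*p^2*r*s + 2*γ*lam*p^2*r^2 + (-1)*γ*lam*p^2*r^3*s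 + (-1)*γ*lam*p^2*q*r + 1*γ*lam*p^2*q*r^2*s + (-1)*γ*lam*p^3*r + (-1)*γ*lam*a*p*r^3*s + (-1)*γ*lam*a*p^2*r^2*s + (-1)*γ*lam*a*p^2*r^3 + 2*γ*lam*a*p^2*q*r^2 + 1*γ*lam*a*p^3*r^2 + 2*γ*lam^2*p*r^2*s + (-1)*γ*lam^2*p^2*r^2 + (-1)*γ*lam^2*p^2*q*r + (-1)*γ^2*p*r^3*s + 1*γ^2*p^2*r^2*s + 1*γ^2*p^2*q*r^2 + (-1)*γ^2*p^3*r^3*s + (-1)*γ^2*p^3*q*r + 1*γ^2*p^3*q*r^2*s + (-1)*γ^2*a*p*q*r^3*s + (-2)*γ^2*a*p^2*r^3*s + 1*γ^2*a*p^2*q*r^2*s + 1*γ^2*a*p^2*q*r^3 + 1*γ^2*a*p^3*q*r^2 + 1*γ^2*lam*p*r^3*s + 1*γ^2*lam*p*q*r^2*s + 4*γ^2*lam*p^2*r^2*s + (-2)*γ^2*lam*p^2*q*r*s + (-2)*γ^2*lam*p^2*q*r^2 + (-1)*γ^2*lam*p^3*r^2 + (-1)*γ^2*lam*p^3*q*r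 + 1*γ^2*lam*a*p*r^2*s + 1*γ^2*lam*a*p*r^3 + (-1)*γ^2*lam*a*p*q*r^2 + (-1)*γ^2*lam*a*p^2*r^2 + (-1)*γ^2*lam*a*p^2*r^3*s + 1*γ^2*lam*a*p^2*q*r^2*s + (-2)*γ^2*lam^2*p*r*s + (-1)*γ^2*lam^2*p*r^2 + 1*γ^2*lam^2*p*q*r + 2*γ^2*lam^2*p^2*r + 1*γ^2*lam^2*a*p*r^2*s + (-1)*γ^2*lam^2*a*p^2*r^2 + 1*γ^3*p^2*r^3*s + 1*γ^3*p^2*q*r^2*s + 2*γ^3*p^3*r^2*s + (-2)*γ^3*p^3*q*r*s + (-2)*γ^3*p^3*q*r^2 + 1*γ^3*a*p*r^3*s + (-1)*γ^3*a*p^2*q*r^2 + (-1)*γ^3*a*p^3*r^3*s + 1*γ^3*a*p^3*q*r^2*s + (-2)*γ^3*lam*p*r^2*s + (-2)*γ^3*lam*p^2*r*s + (-1)*γ^3*lam*p^2*r^2 + 1*γ^3*lam*p^2*r^3*s + 3*γ^3*lam*p^2*q*r + (-1)*γ^3*lam*p^2*q*r^2*s + 2*γ^3*lam*p^3*r + 2*γ^3*lam*a*p*r^3*s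 + (-1)*γ^3*lam*a*p*q*r^2*s + 1*γ^3*lam*a*p^2*r^2*s + (-1)*γ^3*lam*a*p^2*q*r^2 + (-1)*γ^3*lam*a*p^3*r^2 + (-2)*γ^3*lam^2*p*r^2*s + 1*γ^3*lam^2*p*q*r*s + 1*γ^3*lam^2*p^2*r^2 + (-1)*γ^3*lam^2*a*r^2*s + 1*γ^3*lam^2*a*p*r^2 + 1*γ^3*lam^3*r*s + (-1)*γ^3*lam^3*p*r + (-2)*γ^4*p^2*r^2*s + 1*γ^4*p^3*r^3*s + 2*γ^4*p^3*q*r + (-1)*γ^4*p^3*q*r^2*s + 2*γ^4*a*p^2*r^3*s + (-1)*γ^4*a*p^2*q*r^2*s + (-1)*γ^4*a*p^3*q*r^2 + (-2)*γ^4*lam*p*r^3*s + 1*γ^4*lam*p*q*r^2*s + (-3)*γ^4*lam*p^2*r^2*s + 2*γ^4*lam*p^2*q*r*s + 1*γ^4*lam*p^2*q*r^2 + 1*γ^4*lam*p^3*r^2 + (-1)*γ^4*lam*a*r^3*s + (-1)*γ^4*lam*a*p*r^2*s + 1*γ^4*lam*a*p*q*r^2 + 1*γ^4*lam*a*p^2*r^2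 + 2*γ^4*lam^2*r^2*s + 2*γ^4*lam^2*p*r*s + (-1)*γ^4*lam^2*p*r^2 + (-1)*γ^4*lam^2*p*q*r + (-2)*γ^4*lam^2*p^2*r + (-2)*γ^5*p^2*r^3*s + 1*γ^5*p^2*q*r^2*s + (-1)*γ^5*p^3*r^2*s + 1*γ^5*p^3*q*r*s + 1*γ^5*p^3*q*r^2 + (-1)*γ^5*a*p*r^3*s + 1*γ^5*a*p^2*q*r^2 + 1*γ^5*lam*r^3*s + 3*γ^5*lam*p*r^2*s + (-1)*γ^5*lam*p*q*r^2 + 1*γ^5*lam*p^2*r*s + (-1)*γ^5*lam*p^2*r^2 + (-2)*γ^5*lam*p^2*q*r + (-1)*γ^5*lam*p^3*r + 1*γ^6*p*r^3*s + 1*γ^6*p^2*r^2*s + (-1)*γ^6*p^2*q*r^2 + (-1)*γ^6*p^3*q*r) * hR + ((-1)*lam^2*p*r^3*s^2 + 2*lam^2*p^2*q*r^2*s + (-1)*lam^2*p^3*q^2*r + (-1)*γ*lam*p*q*r^3*s^2 + (-2)*γ*lam*p^2*r^3*s^2 + 1*γ*lam*p^2*q*r^2*s^2 + 2*γ*lam*p^2*q*r^3*s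 + 1*γ*lam*p^2*q^2*r^2*s + 2*γ*lam*p^3*q*r^2*s + (-1)*γ*lam*p^3*q^2*r*s + (-2)*γ*lam*p^3*q^2*r^2 + 1*γ*lam*a*p^2*q*r^3*s^2 + (-1)*γ*lam*a*p^3*q^2*r^2*s + 1*γ*lam^2*p*r^2*s^2 + 2*γ*lam^2*p*r^3*s + (-1)*γ*lam^2*p*q*r^2*s + (-2)*γ*lam^2*p^2*r^2*s + (-1)*γ*lam^2*p^2*q*r*s + (-2)*γ*lam^2*p^2*q*r^2 + 1*γ*lam^2*p^2*q^2*r + 2*γ*lam^2*p^3*q*r + 1*γ*lam^2*a*p*r^3*s^2 + (-1)*γ*lam^2*a*p^2*q*r^2*s + (-1)*γ^2*p^2*q*r^3*s^2 + 1*γ^2*p^2*q^2*r^3*s + (-1)*γ^2*p^3*r^3*s^2 + 1*γ^2*p^3*q*r^2*s^2 + 2*γ^2*p^3*q*r^3*s + (-1)*γ^2*p^3*q^2*r^2*s + (-1)*γ^2*p^3*q^2*r^3 + 1*γ^2*a*p^2*q^2*r^3*s^2 + 1*γ^2*a*p^3*q*r^3*s^2 + (-1)*γ^2*a*p^3*q^2*r^2*s^2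 + (-1)*γ^2*a*p^3*q^2*r^3*s + 1*γ^2*lam*p*r^3*s^2 + 1*γ^2*lam*p*q*r^3*s + 1*γ^2*lam*p^2*r^2*s^2 + 2*γ^2*lam*p^2*r^3*s + (-6)*γ^2*lam*p^2*q*r^2*s + (-2)*γ^2*lam*p^2*q*r^3 + (-1)*γ^2*lam*p^2*q*r^3*s^2 + 1*γ^2*lam*p^2*q^2*r^2 + 1*γ^2*lam*p^2*q^2*r^2*s^2 + (-2)*γ^2*lam*p^3*r^2*s + 1*γ^2*lam*p^3*q*r*s + 2*γ^2*lam*p^3*q*r^2 + 1*γ^2*lam*p^3*q^2*r + 1*γ^2*lam*a*p*q*r^3*s^2 + 1*γ^2*lam*a*p^2*r^3*s^2 + (-2)*γ^2*lam*a*p^2*q*r^2*s^2 + (-3)*γ^2*lam*a*p^2*q*r^3*s + 1*γ^2*lam*a*p^2*q^2*r^2*s + 1*γ^2*lam*a*p^3*q*r^2*s + 1*γ^2*lam*a*p^3*q^2*r^2 + (-1)*γ^2*lam^2*p*r^2*s + (-1)*γ^2*lam^2*p*r^3 + 1*γ^2*lam^2*p*r^3*s^2 + 1*γ^2*lam^2*p*q*r^2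 + 1*γ^2*lam^2*p*q*r^2*s^2 + 1*γ^2*lam^2*p^2*r*s + 2*γ^2*lam^2*p^2*r^2 + (-1)*γ^2*lam^2*p^2*q*r + (-3)*γ^2*lam^2*p^2*q*r^2*s + 1*γ^2*lam^2*p^2*q^2*r*s + (-1)*γ^2*lam^2*p^3*r + (-1)*γ^2*lam^2*a*p*r^2*s^2 + (-2)*γ^2*lam^2*a*p*r^3*s + 1*γ^2*lam^2*a*p*q*r^2*s + 1*γ^2*lam^2*a*p^2*r^2*s + 1*γ^2*lam^2*a*p^2*q*r^2 + 1*γ^2*lam^3*p*r^2*s + 1*γ^2*lam^3*p*q*r*s + (-2)*γ^2*lam^3*p^2*q*r + 1*γ^3*p^2*r^3*s^2 + (-1)*γ^3*p^2*q*r^3*s + (-1)*γ^3*p^3*q*r^2*s + (-1)*γ^3*p^3*q*r^3*s^2 + 1*γ^3*p^3*q^2*r^2 + 1*γ^3*p^3*q^2*r^2*s^2 + (-1)*γ^3*a*p^2*q*r^3*s^2 + (-1)*γ^3*a*p^2*q^2*r^3*s + (-1)*γ^3*a*p^3*q*r^3*s + 2*γ^3*a*p^3*q^2*r^2*s + 1*γ^3*a*p^3*q^2*r^3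 + (-1)*γ^3*lam*p*r^3*s + 2*γ^3*lam*p*q*r^3*s^2 + 1*γ^3*lam*p^2*r^2*s + 3*γ^3*lam*p^2*r^3*s^2 + 1*γ^3*lam*p^2*q*r^2 + (-1)*γ^3*lam*p^2*q*r^2*s^2 + (-1)*γ^3*lam*p^2*q*r^3*s + (-1)*γ^3*lam*p^2*q^2*r^2*s + (-1)*γ^3*lam*p^3*q*r + (-3)*γ^3*lam*p^3*q*r^2*s + 1*γ^3*lam*p^3*q^2*r*s + (-1)*γ^3*lam*a*p*r^3*s^2 + (-1)*γ^3*lam*a*p*q*r^3*s + (-1)*γ^3*lam*a*p^2*r^3*s + 3*γ^3*lam*a*p^2*q*r^2*s + 2*γ^3*lam*a*p^2*q*r^3 + (-1)*γ^3*lam*a*p^2*q*r^3*s^2 + (-1)*γ^3*lam*a*p^2*q^2*r^2 + 1*γ^3*lam*a*p^2*q^2*r^2*s^2 + (-1)*γ^3*lam*a*p^3*q*r^2 + (-2)*γ^3*lam^2*p*r^2*s^2 + (-1)*γ^3*lam^2*p*r^3*s + 3*γ^3*lam^2*p*q*r^2*s + 5*γ^3*lam^2*p^2*r^2*s + (-1)*γ^3*lam^2*p^2*q*r*s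 + (-1)*γ^3*lam^2*p^2*q*r^2 + (-1)*γ^3*lam^2*p^2*q^2*r + (-2)*γ^3*lam^2*p^3*q*r + 1*γ^3*lam^2*a*p*r^2*s + 1*γ^3*lam^2*a*p*r^3 + (-1)*γ^3*lam^2*a*p*r^3*s^2 + (-1)*γ^3*lam^2*a*p*q*r^2 + 2*γ^3*lam^2*a*p*q*r^2*s^2 + (-1)*γ^3*lam^2*a*p^2*r^2 + (-1)*γ^3*lam^2*a*p^2*q*r^2*s + (-2)*γ^3*lam^3*p*r*s + (-1)*γ^3*lam^3*p*r^2 + 1*γ^3*lam^3*p*q*r + 2*γ^3*lam^3*p^2*r + 1*γ^3*lam^3*a*r^2*s^2 + (-1)*γ^3*lam^3*a*p*r^2*s + 2*γ^4*p^2*q*r^3*s^2 + 2*γ^4*p^3*r^3*s^2 + (-2)*γ^4*p^3*q*r^2*s^2 + (-1)*γ^4*p^3*q*r^3*s + (-1)*γ^4*p^3*q^2*r^2*s + 1*γ^4*a*p^2*q*r^3*s + (-1)*γ^4*a*p^3*q*r^3*s^2 + (-1)*γ^4*a*p^3*q^2*r^2 + 1*γ^4*a*p^3*q^2*r^2*s^2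 + (-2)*γ^4*lam*p*r^3*s^2 + (-2)*γ^4*lam*p^2*r^2*s^2 + (-1)*γ^4*lam*p^2*r^3*s + 5*γ^4*lam*p^2*q*r^2*s + 1*γ^4*lam*p^2*q*r^3*s^2 + (-1)*γ^4*lam*p^2*q^2*r^2*s^2 + 4*γ^4*lam*p^3*r^2*s + (-2)*γ^4*lam*p^3*q*r*s + (-1)*γ^4*lam*p^3*q*r^2 + (-1)*γ^4*lam*p^3*q^2*r + 1*γ^4*lam*a*p*r^3*s + 1*γ^4*lam*a*p*q*r^3*s^2 + (-1)*γ^4*lam*a*p^2*r^3*s^2 + (-1)*γ^4*lam*a*p^2*q*r^2 + 2*γ^4*lam*a*p^2*q*r^2*s^2 + 1*γ^4*lam*a*p^2*q*r^3*s + (-2)*γ^4*lam*a*p^2*q^2*r^2*s + (-1)*γ^4*lam*a*p^3*q*r^2*s + (-2)*γ^4*lam^2*p*r^2*s + (-1)*γ^4*lam^2*p*q*r^2*s^2 + (-2)*γ^4*lam^2*p^2*r*s + (-1)*γ^4*lam^2*p^2*r^2 + 3*γ^4*lam^2*p^2*q*r + 1*γ^4*lam^2*p^2*q*r^2*s + 2*γ^4*lam^2*p^3*r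 + 1*γ^4*lam^2*a*r^3*s^2 + 1*γ^4*lam^2*a*p*r^2*s^2 + 1*γ^4*lam^2*a*p*r^3*s + (-3)*γ^4*lam^2*a*p*q*r^2*s + (-1)*γ^4*lam^2*a*p^2*r^2*s + 1*γ^4*lam^2*a*p^2*q*r^2 + (-1)*γ^4*lam^3*p*r^2*s + 1*γ^4*lam^3*p*q*r*s + (-1)*γ^4*lam^3*a*r^2*s + 1*γ^4*lam^3*a*p*r^2 + 1*γ^4*lam^4*r*s + (-1)*γ^4*lam^4*p*r + (-2)*γ^5*p^2*r^3*s^2 + 2*γ^5*p^3*q*r^2*s + 1*γ^5*p^3*q*r^3*s^2 + (-1)*γ^5*p^3*q^2*r^2*s^2 + 1*γ^5*a*p^2*q*r^3*s^2 + 1*γ^5*a*p^3*q*r^3*s + (-2)*γ^5*a*p^3*q^2*r^2*s + (-1)*γ^5*lam*p*q*r^3*s^2 + (-2)*γ^5*lam*p^2*r^2*s + (-1)*γ^5*lam*p^2*r^3*s^2 + (-1)*γ^5*lam*p^2*q*r^3*s + 2*γ^5*lam*p^2*q^2*r^2*s + 2*γ^5*lam*p^3*q*r + 1*γ^5*lam*p^3*q*r^2*s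 + 1*γ^5*lam*a*p*r^3*s^2 + (-1)*γ^5*lam*a*p*q*r^3*s + 1*γ^5*lam*a*p^2*r^3*s + (-3)*γ^5*lam*a*p^2*q*r^2*s + 1*γ^5*lam*a*p^2*q^2*r^2 + 1*γ^5*lam*a*p^3*q*r^2 + 1*γ^5*lam^2*p*r^2*s^2 + (-1)*γ^5*lam^2*p*r^3*s + 2*γ^5*lam^2*p*q*r^2*s + (-3)*γ^5*lam^2*p^2*r^2*s + 2*γ^5*lam^2*p^2*q*r*s + (-1)*γ^5*lam^2*p^2*q*r^2 + (-1)*γ^5*lam^2*a*r^3*s + (-1)*γ^5*lam^2*a*p*r^2*s + 1*γ^5*lam^2*a*p*q*r^2 + 1*γ^5*lam^2*a*p^2*r^2 + 2*γ^5*lam^3*r^2*s + 2*γ^5*lam^3*p*r*s + (-1)*γ^5*lam^3*p*r^2 + (-1)*γ^5*lam^3*p*q*r + (-2)*γ^5*lam^3*p^2*r + (-1)*γ^6*p^2*q*r^3*s^2 + (-1)*γ^6*p^3*r^3*s^2 + 1*γ^6*p^3*q*r^2*s^2 + (-1)*γ^6*p^3*q*r^3*s + 2*γ^6*p^3*q^2*r^2*s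 + (-1)*γ^6*a*p^2*q*r^3*s + 1*γ^6*a*p^3*q^2*r^2 + 1*γ^6*lam*p*r^3*s^2 + 1*γ^6*lam*p*q*r^3*s + 1*γ^6*lam*p^2*r^2*s^2 + (-1)*γ^6*lam*p^2*r^3*s + 1*γ^6*lam*p^2*q*r^2*s + (-1)*γ^6*lam*p^2*q^2*r^2 + (-2)*γ^6*lam*p^3*r^2*s + 1*γ^6*lam*p^3*q*r*s + (-1)*γ^6*lam*p^3*q*r^2 + (-1)*γ^6*lam*a*p*r^3*s + 1*γ^6*lam*a*p^2*q*r^2 + 1*γ^6*lam^2*r^3*s + 3*γ^6*lam^2*p*r^2*s + (-1)*γ^6*lam^2*p*q*r^2 + 1*γ^6*lam^2*p^2*r*s + (-1)*γ^6*lam^2*p^2*r^2 + (-2)*γ^6*lam^2*p^2*q*r + (-1)*γ^6*lam^2*p^3*r + 1*γ^7*p^2*r^3*s^2 + 1*γ^7*p^2*q*r^3*s + (-1)*γ^7*p^3*q*r^2*s + (-1)*γ^7*p^3*q^2*r^2 + 1*γ^7*lam*p*r^3*s + 1*γ^7*lam*p^2*r^2*s + (-1)*γ^7*lam*p^2*q*r^2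 + (-1)*γ^7*lam*p^3*q*r) * eB
end
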